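/- arXiv:0910.3369 — 7 statements merged into one kernel-verified Lean document; each statement's English description precedes it below -/
import Mathlib

section
/- Let (x_i, f_i) be a Schauder frame of a Banach space X with projection constant K. Then the closed linear span of (f_i)_{i∈ℕ} in X* is a norming subspace of X*: for every x ∈ X, ‖x‖ ≤ K · sup{ |f(x)| : f in the closed linear span of (f_i), ‖f‖ ≤ 1 }. -/
open Filter Topology

/-!
Pick a norming functional `φ` for `v` (`‖φ‖ ≤ 1`, `φ v = ‖v‖`) and compose it with the partial
sum operators `S n = ∑ i < n, f i (·) • x i`. The functionals `φ ∘ S n = ∑ i < n, φ (x i) • f i`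
lie in the span of the `f i` and have norm at most `K`, so `|φ (S n v)| ≤ K * C`; letting
`n → ∞`, `φ (S n v) → φ v = ‖v‖`.
-/

section PartialSum

variable {𝕜 X : Type*} [NontriviallyNormedField 𝕜] [NormedAddCommGroup X] [NormedSpace 𝕜 X]

noncomputable def frameSum (x : ℕ → X) (f : ℕ → StrongDual 𝕜 X) (n : ℕ) : X →L[𝕜] X :=
  ∑ i ∈ Finset.range n, (f i).smulRight (x i)

@[simp]
theorem frameSum_apply (x : ℕ → X) (f : ℕ → StrongDual 𝕜 X) (n : ℕ) (v : X) :
    frameSum x f n v = ∑ i ∈ Finset.range n, f i v • x i := by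
  simp [frameSum]

theorem comp_frameSum_mem_span (x : ℕ → X) (f : ℕ → StrongDual 𝕜 X) (n : ℕ)
    (φ : StrongDual 𝕜 X) : φ.comp (frameSum x f n) ∈ Submodule.span 𝕜 (Set.range f) := by
  have hφS : φ.comp (frameSum x f n) = ∑ i ∈ Finset.range n, φ (x i) • f i := by
    ext v
    simp [mul_comm]
  rw [hφS]
  exact Submodule.sum_mem _ fun i _ => Submodule.smul_mem _ _ (Submodule.subset_span ⟨i, rfl⟩)

end PartialSum

theorem abs_apply_le_mul_norm_of_mem {X : Type*} [NormedAddCommGroup X] [NormedSpace ℝ X]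
    {N : Submodule ℝ (StrongDual ℝ X)} {v : X} {C : ℝ}
    (hC : ∀ g ∈ N, ‖g‖ ≤ 1 → |g v| ≤ C) {g : StrongDual ℝ X} (hg : g ∈ N) :
    |g v| ≤ C * ‖g‖ := by
  rcases eq_or_ne g 0 with rfl | hg0
  · simp
  have hpos : 0 < ‖g‖ := norm_pos_iff.mpr hg0
  have hscaled := hC (‖g‖⁻¹ • g) (N.smul_mem _ hg) (by simp [norm_smul, hg0])
  rw [smul_apply, smul_eq_mul, abs_mul, abs_inv, abs_norm,
    inv_mul_le_iff₀ hpos] at hscaled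
  linarith

theorem schauderFrame_closedSpan_norming_general
    {X : Type*} [NormedAddCommGroup X] [NormedSpace ℝ X]
    (x : ℕ → X) (f : ℕ → X →L[ℝ] ℝ)
    (hframe : ∀ v : X,
      Tendsto (fun n => ∑ i ∈ Finset.range n, f i v • x i) atTop (𝓝 v))
    (K : ℝ)
    (hK : IsLUB {r : ℝ | ∃ (v : X) (m n : ℕ), ‖v‖ ≤ 1 ∧ m ≤ n ∧
      r = ‖∑ i ∈ Finset.Icc m n, f i v • x i‖} K) :
    ∀ v : X, ∀ C : ℝ,
      (∀ g ∈ closure ((Submodule.span ℝ (Set.range f) : Submodule ℝ (X →L[ℝ] ℝ)) :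
          Set (X →L[ℝ] ℝ)), ‖g‖ ≤ 1 → |g v| ≤ C) →
      ‖v‖ ≤ K * C := by
  intro v C hC
  rw [← Submodule.topologicalClosure_coe] at hC
  have hK0 : 0 ≤ K := hK.1 ⟨0, 0, 0, by simp, le_rfl, by simp⟩
  have hC0 : 0 ≤ C := (abs_nonneg _).trans (hC 0 (Submodule.zero_mem _) (by simp))
  have hS : ∀ n, ‖frameSum x f n‖ ≤ K := by
    rintro (_ | n)
    · simpa [frameSum] using hK0
    refine ContinuousLinearMap.opNorm_le_of_unit_norm hK0 fun u hu => ?_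
    rw [frameSum_apply, Nat.range_succ_eq_Icc_zero]
    exact hK.1 ⟨u, 0, n, hu.le, n.zero_le, rfl⟩
  obtain ⟨φ, hφ, hφv⟩ := exists_dual_vector'' ℝ v
  have hbound : ∀ n, φ (frameSum x f n v) ≤ K * C := fun n =>
    calc φ (frameSum x f n v) ≤ |φ.comp (frameSum x f n) v| := le_abs_self _
      _ ≤ C * ‖φ.comp (frameSum x f n)‖ := abs_apply_le_mul_norm_of_mem hC
          (Submodule.le_topologicalClosure _ (comp_frameSum_mem_span x f n φ))
      _ ≤ C * (1 * K) := by
          gcongr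
          exact (φ.opNorm_comp_le _).trans (mul_le_mul hφ (hS n) (norm_nonneg _) zero_le_one)
      _ = K * C := by ring
  have hlim : Tendsto (fun n => φ (frameSum x f n v)) atTop (𝓝 (φ v)) := by
    simpa only [frameSum_apply, Function.comp_def] using (φ.continuous.tendsto v).comp (hframe v)
  have hφv' : φ v = ‖v‖ := hφv
  exact hφv' ▸ le_of_tendsto' hlim hbound

/-- Let `(x i, f i)` be a Schauder frame of a Banach space `X` with
projection constant `K`. Then the closed linear span of `(f i)` in `X*` is a norming
subspace: `‖v‖ ≤ K * sup { |g v| : g in the closed span of (f i), ‖g‖ ≤ 1 }`, expressed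
via all upper bounds `C` of that set. -/
theorem schauderFrame_closedSpan_norming
    {X : Type*} [NormedAddCommGroup X] [NormedSpace ℝ X] [CompleteSpace X]
    (x : ℕ → X) (f : ℕ → X →L[ℝ] ℝ)
    (hx : ∀ i, x i ≠ 0) (hf : ∀ i, f i ≠ 0)
    (hframe : ∀ v : X,
      Tendsto (fun n => ∑ i ∈ Finset.range n, f i v • x i) atTop (𝓝 v))
    (K : ℝ)
    (hK : IsLUB {r : ℝ | ∃ (v : X) (m n : ℕ), ‖v‖ ≤ 1 ∧ m ≤ n ∧
      r = ‖∑ i ∈ Finset.Icc m n, f i v • x i‖} K) :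
    ∀ v : X, ∀ C : ℝ,
      (∀ g ∈ closure ((Submodule.span ℝ (Set.range f) : Submodule ℝ (X →L[ℝ] ℝ)) :
          Set (X →L[ℝ] ℝ)), ‖g‖ ≤ 1 → |g v| ≤ C) →
      ‖v‖ ≤ K * C :=
  schauderFrame_closedSpan_norming_general x f hframe K hK
end

section
/- Let (x_i, f_i) be a Schauder frame of a Banach space X. Then the set X_0 = { x ∈ X : sup{ |f(x)| : f ∈ span(f_i : i ≥ n), ‖f‖ ≤ 1 } → 0 as n → ∞ } is a norm-closed linear subspace of X. Moreover, if the frame is locally boundedly complete, then X_0 = X. -/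
open Filter Topology

/-- The quantity `sup { |g v| : g ∈ span (f i : i ≥ n), ‖g‖ ≤ 1 }`, i.e. the norm of the
restriction of (evaluation at) `v` to the span of the tail `(f i)_{i ≥ n}`. -/
noncomputable def tailSupF {X : Type*} [NormedAddCommGroup X] [NormedSpace ℝ X]
    (f : ℕ → X →L[ℝ] ℝ) (v : X) (n : ℕ) : ℝ :=
  sSup ((fun g : X →L[ℝ] ℝ => |g v|) ''
    {g | g ∈ Submodule.span ℝ (f '' {i | n ≤ i}) ∧ ‖g‖ ≤ 1})

/-! The frame expansion puts every vector in the closure of `span (x m)`, so the second claim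
follows from the first once `X₀` is known to be a closed subspace. For that, note that
`v ↦ tailSupF f v n` is a seminorm dominated by the norm, uniformly in `n`; the vectors along
which a norm-dominated family of seminorms tends to zero always form a closed subspace. -/

namespace Seminorm

variable {𝕜 E ι : Type*} [NormedField 𝕜]

section Submodule

variable [AddCommGroup E] [Module 𝕜 E]

def tendstoZeroSubmodule (p : ι → Seminorm 𝕜 E) (l : Filter ι) : Submodule 𝕜 E where
  carrier := {v | Tendsto (fun i => p i v) l (𝓝 0)}
  zero_mem' := by simp only [Set.mem_ofPred_eq, map_zero, tendsto_const_nhds]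
  add_mem' {v w} hv hw := by
    refine squeeze_zero (fun i => apply_nonneg _ _) (fun i => map_add_le_add (p i) v w) ?_
    simpa using hv.add hw
  smul_mem' c v hv := by
    simpa [map_smul_eq_mul] using hv.const_mul ‖c‖

theorem mem_tendstoZeroSubmodule {p : ι → Seminorm 𝕜 E} {l : Filter ι} {v : E} :
    v ∈ tendstoZeroSubmodule p l ↔ Tendsto (fun i => p i v) l (𝓝 0) :=
  Iff.rfl

end Submodule

theorem isClosed_tendstoZeroSubmodule [SeminormedAddCommGroup E] [Module 𝕜 E]
    {p : ι → Seminorm 𝕜 E} (l : Filter ι) (hp : ∀ i v, p i v ≤ ‖v‖) :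
    IsClosed (tendstoZeroSubmodule p l : Set E) := by
  refine isClosed_of_closure_subset fun v hv => ?_
  rw [SetLike.mem_coe, mem_tendstoZeroSubmodule, Metric.tendsto_nhds]
  intro ε hε
  obtain ⟨w, hw, hvw⟩ := Metric.mem_closure_iff.1 hv (ε / 2) (half_pos hε)
  filter_upwards [Metric.tendsto_nhds.1 hw (ε / 2) (half_pos hε)] with i hi
  rw [Real.dist_0_eq_abs, abs_of_nonneg (apply_nonneg _ _)] at hi ⊢
  calc p i v ≤ p i w + p i (v - w) := by simpa using map_add_le_add (p i) w (v - w)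
    _ ≤ p i w + ‖v - w‖ := by gcongr; exact hp i _
    _ < ε / 2 + ε / 2 := by rw [← dist_eq_norm]; exact add_lt_add hi hvw
    _ = ε := add_halves ε

end Seminorm

section SupAbsApply

variable {X : Type*} [SeminormedAddCommGroup X] [NormedSpace ℝ X] {S : Set (X →L[ℝ] ℝ)}

theorem bddAbove_abs_apply_image (hS : ∀ g ∈ S, ‖g‖ ≤ 1) (v : X) :
    BddAbove ((fun g : X →L[ℝ] ℝ => |g v|) '' S) := by
  refine ⟨‖v‖, ?_⟩
  rintro _ ⟨g, hg, rfl⟩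
  exact g.le_of_opNorm_le (hS g hg) v |>.trans_eq (one_mul _)

variable (S) in
noncomputable def supAbsApplySeminorm (h0 : (0 : X →L[ℝ] ℝ) ∈ S) (hS : ∀ g ∈ S, ‖g‖ ≤ 1) :
    Seminorm ℝ X :=
  Seminorm.ofSMulLE (fun v => sSup ((fun g : X →L[ℝ] ℝ => |g v|) '' S))
    (by simp [Set.Nonempty.image_const ⟨0, h0⟩])
    (fun v w => csSup_le (Set.image_nonempty.2 ⟨0, h0⟩) <| by
      rintro _ ⟨g, hg, rfl⟩
      dsimp only
      rw [map_add]
      exact (abs_add_le _ _).trans <| add_le_add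
        (le_csSup (bddAbove_abs_apply_image hS v) ⟨g, hg, rfl⟩)
        (le_csSup (bddAbove_abs_apply_image hS w) ⟨g, hg, rfl⟩))
    (fun c v => csSup_le (Set.image_nonempty.2 ⟨0, h0⟩) <| by
      rintro _ ⟨g, hg, rfl⟩
      dsimp only
      rw [map_smul, smul_eq_mul, abs_mul, Real.norm_eq_abs]
      exact mul_le_mul_of_nonneg_left
        (le_csSup (bddAbove_abs_apply_image hS v) ⟨g, hg, rfl⟩) (abs_nonneg c))

theorem supAbsApplySeminorm_le_norm (h0 : (0 : X →L[ℝ] ℝ) ∈ S) (hS : ∀ g ∈ S, ‖g‖ ≤ 1)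
    (v : X) : supAbsApplySeminorm S h0 hS v ≤ ‖v‖ :=
  csSup_le (Set.image_nonempty.2 ⟨0, h0⟩) <| by
    rintro _ ⟨g, hg, rfl⟩
    exact g.le_of_opNorm_le (hS g hg) v |>.trans_eq (one_mul _)

end SupAbsApply

section Tail

variable {X : Type*} [NormedAddCommGroup X] [NormedSpace ℝ X]

noncomputable def tailSeminorm (f : ℕ → X →L[ℝ] ℝ) (n : ℕ) : Seminorm ℝ X :=
  supAbsApplySeminorm {g | g ∈ Submodule.span ℝ (f '' {i | n ≤ i}) ∧ ‖g‖ ≤ 1}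
    ⟨Submodule.zero_mem _, by simp⟩ fun _ hg => hg.2

end Tail

theorem schauderFrame_X0_closed_subspace_general
    {X : Type*} [NormedAddCommGroup X] [NormedSpace ℝ X]
    (x : ℕ → X) (f : ℕ → X →L[ℝ] ℝ)
    (hframe : ∀ v : X,
      Tendsto (fun n => ∑ i ∈ Finset.range n, f i v • x i) atTop (𝓝 v)) :
    (∃ X₀ : Submodule ℝ X, IsClosed (X₀ : Set X) ∧
      ∀ v : X, v ∈ X₀ ↔ Tendsto (tailSupF f v) atTop (𝓝 0)) ∧
    ((∀ m : ℕ, Tendsto (tailSupF f (x m)) atTop (𝓝 0)) →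
      ∀ v : X, Tendsto (tailSupF f v) atTop (𝓝 0)) := by
  set X₀ := Seminorm.tendstoZeroSubmodule (tailSeminorm f) atTop
  have hclosed : IsClosed (X₀ : Set X) :=
    Seminorm.isClosed_tendstoZeroSubmodule atTop fun n =>
      supAbsApplySeminorm_le_norm _ _
  refine ⟨⟨X₀, hclosed, fun _ => Seminorm.mem_tendstoZeroSubmodule⟩, fun hloc v => ?_⟩
  have hpartial (n : ℕ) : ∑ i ∈ Finset.range n, f i v • x i ∈ X₀ :=
    X₀.sum_mem fun i _ => X₀.smul_mem _ (hloc i)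
  exact hclosed.mem_of_tendsto (hframe v) (Eventually.of_forall hpartial)

/-- Let `(x i, f i)` be a Schauder frame of a Banach space `X`. Then
`X₀ = { v : ‖v‖ restricted to span (f i : i ≥ n) → 0 }` is a norm-closed linear subspace
of `X`; moreover, if the frame is locally boundedly complete then `X₀ = X`. -/
theorem schauderFrame_X0_closed_subspace
    {X : Type*} [NormedAddCommGroup X] [NormedSpace ℝ X] [CompleteSpace X]
    (x : ℕ → X) (f : ℕ → X →L[ℝ] ℝ)
    (hx : ∀ i, x i ≠ 0) (hf : ∀ i, f i ≠ 0)
    (hframe : ∀ v : X,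
      Tendsto (fun n => ∑ i ∈ Finset.range n, f i v • x i) atTop (𝓝 v)) :
    (∃ X₀ : Submodule ℝ X, IsClosed (X₀ : Set X) ∧
      ∀ v : X, v ∈ X₀ ↔ Tendsto (tailSupF f v) atTop (𝓝 0)) ∧
    ((∀ m : ℕ, Tendsto (tailSupF f (x m)) atTop (𝓝 0)) →
      ∀ v : X, Tendsto (tailSupF f v) atTop (𝓝 0)) :=
  schauderFrame_X0_closed_subspace_general x f hframe
end

section
/- Let (x_i, f_i) be a Schauder frame of a Banach space X. Then the following are equivalent: (a) every normalized block sequence of (x_i) is weakly null; (b) the frame is locally shrinking, and every sequence (u_n) in the closed unit ball of X with lim_{n→∞} f_m(u_n) = 0 for all m ∈ ℕ is weakly null. -/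
/-!
Everything is governed by how large a functional `g` can be on bounded vectors of the tail spans
`span (x i : i ≥ N)`. The `k`-th term of a normalized block sequence lies in such a tail span, so
(b) implies (a). Conversely, vectors of bounded norm in arbitrarily far tail spans on which `|g|`
stays bounded below are finite blocks, so they can be picked successively with disjoint supports
and normalized, giving a normalized block sequence that is not weakly null. Such vectors exist if
`f m` is not locally shrinking, and also if `g (u n)` does not tend to zero along a
coordinate-null `u` in the unit ball: dropping the first `N` terms of the frame expansion of
`u n` and truncating the rest changes `u n` only a little.
-/

open Filter Topology

/-- `sup { |g z| : z ∈ span (x i : i ≥ n), ‖z‖ ≤ 1 }`. -/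
noncomputable def tailSupX {X : Type*} [NormedAddCommGroup X] [NormedSpace ℝ X]
    (x : ℕ → X) (g : X →L[ℝ] ℝ) (n : ℕ) : ℝ :=
  sSup ((fun z : X => |g z|) ''
    {z | z ∈ Submodule.span ℝ (x '' {i | n ≤ i}) ∧ ‖z‖ ≤ 1})

/-- `u` is a normalized block sequence of `(x i)`: `u k = ∑_{i=m k}^{n k} a i • x i` with
`m k ≤ n k < m (k+1)` and `‖u k‖ = 1`. -/
def IsNormalizedBlock {X : Type*} [NormedAddCommGroup X] [NormedSpace ℝ X]
    (x : ℕ → X) (u : ℕ → X) : Prop :=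
  ∃ (m n : ℕ → ℕ) (a : ℕ → ℝ), (∀ k, m k ≤ n k) ∧ (∀ k, n k < m (k + 1)) ∧
    (∀ k, u k = ∑ i ∈ Finset.Icc (m k) (n k), a i • x i) ∧ ∀ k, ‖u k‖ = 1

/-- `u` is weakly null. -/
def WeaklyNull {X : Type*} [NormedAddCommGroup X] [NormedSpace ℝ X] (u : ℕ → X) : Prop :=
  ∀ g : X →L[ℝ] ℝ, Tendsto (fun k => g (u k)) atTop (𝓝 0)

open Finset

section

variable {X : Type*} [NormedAddCommGroup X] [NormedSpace ℝ X]

theorem eq_of_mem_Icc_of_mem_Icc {m n : ℕ → ℕ} (hmn : ∀ k, m k ≤ n k)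
    (hnm : ∀ k, n k < m (k + 1)) {k k' i : ℕ} (hk : i ∈ Icc (m k) (n k))
    (hk' : i ∈ Icc (m k') (n k')) : k = k' := by
  have hmono : StrictMono m := strictMono_nat_of_lt_succ fun k => (hmn k).trans_lt (hnm k)
  have hsep : ∀ {j j'}, j < j' → n j < m j' := fun h => (hnm _).trans_le (hmono.monotone h)
  rw [mem_Icc] at hk hk'
  rcases lt_trichotomy k k' with h | h | h
  · have := hsep h; omega
  · exact h
  · have := hsep h; omega

theorem isNormalizedBlock_of_blockwise {x u : ℕ → X} (m n : ℕ → ℕ) (b : ℕ → ℕ → ℝ)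
    (hmn : ∀ k, m k ≤ n k) (hnm : ∀ k, n k < m (k + 1))
    (hu : ∀ k, u k = ∑ i ∈ Icc (m k) (n k), b k i • x i) (hu1 : ∀ k, ‖u k‖ = 1) :
    IsNormalizedBlock x u := by
  classical
  refine ⟨m, n, fun i => if h : ∃ k, i ∈ Icc (m k) (n k) then b h.choose i else 0,
    hmn, hnm, fun k => ?_, hu1⟩
  rw [hu k]
  refine sum_congr rfl fun i hi => ?_
  have hex : ∃ k, i ∈ Icc (m k) (n k) := ⟨k, hi⟩
  simp only [dif_pos hex, eq_of_mem_Icc_of_mem_Icc hmn hnm hex.choose_spec hi]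

theorem sum_smul_mem_span_tail (x : ℕ → X) (a : ℕ → ℝ) {s : Finset ℕ} {N : ℕ}
    (hs : ∀ i ∈ s, N ≤ i) : ∑ i ∈ s, a i • x i ∈ Submodule.span ℝ (x '' {i | N ≤ i}) :=
  Submodule.sum_smul_mem _ a fun i hi => Submodule.subset_span ⟨i, hs i hi, rfl⟩

theorem exists_eq_sum_Icc_of_mem_span_tail {x : ℕ → X} {N : ℕ} {z : X}
    (hz : z ∈ Submodule.span ℝ (x '' {i | N ≤ i})) :
    ∃ E, N ≤ E ∧ ∃ a : ℕ → ℝ, z = ∑ i ∈ Icc N E, a i • x i := by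
  obtain ⟨l, hl, rfl⟩ := (Finsupp.mem_span_image_iff_linearCombination ℝ).1 hz
  refine ⟨max N (l.support.sup id), le_max_left _ _, l, ?_⟩
  rw [Finsupp.linearCombination_apply, Finsupp.sum]
  refine sum_subset (fun i hi => mem_Icc.2 ⟨(Finsupp.mem_supported ℝ l).1 hl hi, ?_⟩) ?_
  · exact (le_sup (f := id) hi).trans (le_max_right _ _)
  · intro i _ hi
    rw [Finsupp.notMem_support_iff.1 hi, zero_smul]

theorem exists_isNormalizedBlock_not_tendsto {x : ℕ → X} {g : X →L[ℝ] ℝ} {δ C : ℝ}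
    (hδ : 0 < δ) (h : ∀ N, ∃ z ∈ Submodule.span ℝ (x '' {i | N ≤ i}), ‖z‖ ≤ C ∧ δ ≤ |g z|) :
    ∃ u, IsNormalizedBlock x u ∧ ¬ Tendsto (fun k => g (u k)) atTop (𝓝 0) := by
  choose z hz hzC hgz using h
  choose E hE a ha using fun N => exists_eq_sum_Icc_of_mem_span_tail (hz N)
  have hz0 : ∀ N, 0 < ‖z N‖ := fun N =>
    norm_pos_iff.2 fun h0 => hδ.not_ge (by simpa [h0] using hgz N)
  set s : ℕ → ℕ := fun j => (fun N => E N + 1)^[j] 0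
  have hs : ∀ j, s (j + 1) = E (s j) + 1 := fun j => Function.iterate_succ_apply' _ _ _
  refine ⟨fun j => ‖z (s j)‖⁻¹ • z (s j),
    isNormalizedBlock_of_blockwise s (fun j => E (s j)) (fun j i => ‖z (s j)‖⁻¹ * a (s j) i)
      (fun j => hE _) (fun j => by rw [hs]; omega) (fun j => ?_) (fun j => ?_), ?_⟩
  · simp only [ha (s j), smul_sum, smul_smul]
  · rw [norm_smul, norm_inv, norm_norm, inv_mul_cancel₀ (hz0 _).ne']
  intro hlim
  have hδC : 0 < δ / C := div_pos hδ ((hz0 0).trans_le (hzC 0))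
  obtain ⟨j, hj⟩ := (NormedAddGroup.tendsto_nhds_zero.1 hlim _ hδC).exists
  have hlow : δ / C ≤ |g (z (s j))| / ‖z (s j)‖ :=
    div_le_div₀ (abs_nonneg _) (hgz _) (hz0 _) (hzC _)
  rw [map_smul, smul_eq_mul, Real.norm_eq_abs, abs_mul, abs_inv, abs_norm, inv_mul_eq_div] at hj
  linarith

theorem tailSupX_bddAbove (x : ℕ → X) (g : X →L[ℝ] ℝ) (n : ℕ) :
    BddAbove ((fun z : X => |g z|) ''
      {z | z ∈ Submodule.span ℝ (x '' {i | n ≤ i}) ∧ ‖z‖ ≤ 1}) := by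
  refine ⟨‖g‖, ?_⟩
  rintro _ ⟨z, ⟨-, hz1⟩, rfl⟩
  simpa [← Real.norm_eq_abs] using g.le_of_opNorm_le_of_le le_rfl hz1

theorem tailSupX_set_nonempty (x : ℕ → X) (g : X →L[ℝ] ℝ) (n : ℕ) :
    ((fun z : X => |g z|) ''
      {z | z ∈ Submodule.span ℝ (x '' {i | n ≤ i}) ∧ ‖z‖ ≤ 1}).Nonempty :=
  ⟨_, 0, ⟨Submodule.zero_mem _, by simp⟩, rfl⟩

theorem abs_le_tailSupX {x : ℕ → X} {g : X →L[ℝ] ℝ} {n : ℕ} {z : X}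
    (hz : z ∈ Submodule.span ℝ (x '' {i | n ≤ i})) (hz1 : ‖z‖ ≤ 1) :
    |g z| ≤ tailSupX x g n :=
  le_csSup (tailSupX_bddAbove x g n) ⟨z, ⟨hz, hz1⟩, rfl⟩

theorem tailSupX_nonneg (x : ℕ → X) (g : X →L[ℝ] ℝ) (n : ℕ) : 0 ≤ tailSupX x g n := by
  simpa using abs_le_tailSupX (x := x) (g := g) (Submodule.zero_mem _) (by simp)

theorem tailSupX_antitone (x : ℕ → X) (g : X →L[ℝ] ℝ) : Antitone (tailSupX x g) := by
  intro a b hab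
  refine csSup_le_csSup (tailSupX_bddAbove x g a) (tailSupX_set_nonempty x g b) ?_
  rintro _ ⟨z, ⟨hz, hz1⟩, rfl⟩
  exact ⟨z, ⟨Submodule.span_mono (Set.image_mono fun i hi => hab.trans hi) hz, hz1⟩, rfl⟩

theorem IsNormalizedBlock.tendsto_apply_of_tendsto_tailSupX {x u : ℕ → X} {g : X →L[ℝ] ℝ}
    (hu : IsNormalizedBlock x u) (hg : Tendsto (tailSupX x g) atTop (𝓝 0)) :
    Tendsto (fun k => g (u k)) atTop (𝓝 0) := by
  obtain ⟨m, n, a, hmn, hnm, hsum, hu1⟩ := hu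
  have hm : Tendsto m atTop atTop :=
    (strictMono_nat_of_lt_succ fun k => (hmn k).trans_lt (hnm k)).tendsto_atTop
  refine squeeze_zero_norm (fun k => ?_) (hg.comp hm)
  rw [Real.norm_eq_abs, hsum k]
  exact abs_le_tailSupX (sum_smul_mem_span_tail x a fun i hi => (mem_Icc.1 hi).1)
    (hsum k ▸ (hu1 k).le)

theorem tendsto_tailSupX_of_forall_isNormalizedBlock {x : ℕ → X} {g : X →L[ℝ] ℝ}
    (hblock : ∀ u, IsNormalizedBlock x u → Tendsto (fun k => g (u k)) atTop (𝓝 0)) :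
    Tendsto (tailSupX x g) atTop (𝓝 0) := by
  refine tendsto_order.2 ⟨fun a ha => Eventually.of_forall fun n =>
    ha.trans_le (tailSupX_nonneg x g n), fun ε hε => ?_⟩
  obtain ⟨N, hN⟩ : ∃ N, tailSupX x g N < ε := by
    by_contra! hbig
    have hfar : ∀ N, ∃ z ∈ Submodule.span ℝ (x '' {i | N ≤ i}), ‖z‖ ≤ 1 ∧ ε / 2 ≤ |g z| := by
      intro N
      obtain ⟨_, ⟨z, ⟨hz, hz1⟩, rfl⟩, hlt⟩ := exists_lt_of_lt_csSup
        (tailSupX_set_nonempty x g N) ((half_lt_self hε).trans_le (hbig N))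
      exact ⟨z, hz, hz1, hlt.le⟩
    obtain ⟨u, hu, hgu⟩ := exists_isNormalizedBlock_not_tendsto (half_pos hε) hfar
    exact hgu (hblock u hu)
  exact eventually_atTop.2 ⟨N, fun n hn => (tailSupX_antitone x g hn).trans_lt hN⟩

section Frames

variable {x : ℕ → X} {f : ℕ → X →L[ℝ] ℝ}

theorem tendsto_sum_Ico_of_frame
    (hframe : ∀ v : X, Tendsto (fun n => ∑ i ∈ range n, f i v • x i) atTop (𝓝 v))
    (v : X) (N : ℕ) :
    Tendsto (fun M => ∑ i ∈ Ico N M, f i v • x i) atTop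
      (𝓝 (v - ∑ i ∈ range N, f i v • x i)) :=
  ((hframe v).sub_const _).congr' <| (eventually_ge_atTop N).mono fun _ hM =>
    (sum_Ico_eq_sub _ hM).symm

theorem eventually_exists_mem_span_tail_near
    (hframe : ∀ v : X, Tendsto (fun n => ∑ i ∈ range n, f i v • x i) atTop (𝓝 v))
    {u : ℕ → X} (hfu : ∀ m, Tendsto (fun n => f m (u n)) atTop (𝓝 0)) (N : ℕ) {η : ℝ}
    (hη : 0 < η) :
    ∀ᶠ n in atTop, ∃ z ∈ Submodule.span ℝ (x '' {i | N ≤ i}), ‖z - u n‖ < η := by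
  have hhead : Tendsto (fun n => ∑ i ∈ range N, f i (u n) • x i) atTop (𝓝 0) := by
    simpa using tendsto_finsetSum _ fun i _ => (hfu i).smul_const (x i)
  filter_upwards [(tendsto_zero_iff_norm_tendsto_zero.1 hhead).eventually
    (gt_mem_nhds (half_pos hη))] with n hn
  obtain ⟨M, hM⟩ := ((tendsto_sum_Ico_of_frame hframe (u n) N).eventually
    (Metric.ball_mem_nhds _ (half_pos hη))).exists
  rw [dist_eq_norm] at hM
  refine ⟨∑ i ∈ Ico N M, f i (u n) • x i,
    sum_smul_mem_span_tail x _ fun i hi => (mem_Ico.1 hi).1, ?_⟩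
  calc _ = ‖(∑ i ∈ Ico N M, f i (u n) • x i - (u n - ∑ i ∈ range N, f i (u n) • x i))
        - ∑ i ∈ range N, f i (u n) • x i‖ := by congr 1; abel
    _ ≤ _ := norm_sub_le _ _
    _ < η / 2 + η / 2 := add_lt_add hM hn
    _ = η := add_halves η

theorem tendsto_apply_of_forall_isNormalizedBlock
    (hframe : ∀ v : X, Tendsto (fun n => ∑ i ∈ range n, f i v • x i) atTop (𝓝 v))
    {g : X →L[ℝ] ℝ}
    (hblock : ∀ u, IsNormalizedBlock x u → Tendsto (fun k => g (u k)) atTop (𝓝 0))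
    {u : ℕ → X} (hu : ∀ n, ‖u n‖ ≤ 1) (hfu : ∀ m, Tendsto (fun n => f m (u n)) atTop (𝓝 0)) :
    Tendsto (fun n => g (u n)) atTop (𝓝 0) := by
  by_contra hg
  obtain ⟨δ, hδ, hfreq⟩ : ∃ δ > 0, ∃ᶠ n in atTop, δ ≤ |g (u n)| := by
    simpa only [NormedAddGroup.tendsto_nhds_zero, Real.norm_eq_abs, not_forall, not_eventually,
      not_lt, exists_prop] using hg
  set η := δ / (2 * (‖g‖ + 1)) with hη_def
  have hη : 0 < η := by positivity
  have hgη : ‖g‖ * η ≤ δ / 2 := by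
    calc ‖g‖ * η ≤ (‖g‖ + 1) * η := by gcongr; linarith
      _ = δ / 2 := by rw [hη_def]; field_simp
  have hfar : ∀ N, ∃ z ∈ Submodule.span ℝ (x '' {i | N ≤ i}), ‖z‖ ≤ 1 + η ∧ δ / 2 ≤ |g z| := by
    intro N
    obtain ⟨n, hn, z, hz, hzu⟩ :=
      (hfreq.and_eventually (eventually_exists_mem_span_tail_near hframe hfu N hη)).exists
    have hgzu : |g z - g (u n)| ≤ ‖g‖ * η := by
      rw [← map_sub, ← Real.norm_eq_abs]
      exact g.le_of_opNorm_le_of_le le_rfl hzu.le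
    refine ⟨z, hz, ?_, ?_⟩
    · linarith [norm_sub_norm_le z (u n), hu n]
    · linarith [abs_sub_abs_le_abs_sub (g (u n)) (g z), abs_sub_comm (g z) (g (u n))]
  obtain ⟨v, hv, hgv⟩ := exists_isNormalizedBlock_not_tendsto (half_pos hδ) hfar
  exact hgv (hblock v hv)

end Frames

end

theorem schauderFrame_block_weaklyNull_iff_general
    {X : Type*} [NormedAddCommGroup X] [NormedSpace ℝ X]
    (x : ℕ → X) (f : ℕ → X →L[ℝ] ℝ)
    (hframe : ∀ v : X,
      Tendsto (fun n => ∑ i ∈ Finset.range n, f i v • x i) atTop (𝓝 v)) :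
    (∀ u : ℕ → X, IsNormalizedBlock x u → WeaklyNull u) ↔
      ((∀ m : ℕ, Tendsto (tailSupX x (f m)) atTop (𝓝 0)) ∧
        ∀ u : ℕ → X, (∀ n, ‖u n‖ ≤ 1) →
          (∀ m : ℕ, Tendsto (fun n => f m (u n)) atTop (𝓝 0)) → WeaklyNull u) := by
  constructor
  · intro hblock
    exact ⟨fun m => tendsto_tailSupX_of_forall_isNormalizedBlock fun u hu => hblock u hu (f m),
      fun u hu hfu g => tendsto_apply_of_forall_isNormalizedBlock hframe
        (fun v hv => hblock v hv g) hu hfu⟩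
  · rintro ⟨hshrink, hcoord⟩ u hu
    obtain ⟨-, -, -, -, -, -, hu1⟩ := id hu
    exact hcoord u (fun k => (hu1 k).le) fun m => hu.tendsto_apply_of_tendsto_tailSupX (hshrink m)

/-- Let `(x i, f i)` be a Schauder frame of a Banach space `X`. Then
every normalized block sequence of `(x i)` is weakly null iff the frame is locally
shrinking and every sequence `(u n)` in the unit ball with `f m (u n) → 0` for all `m`
is weakly null. -/
theorem schauderFrame_block_weaklyNull_iff
    {X : Type*} [NormedAddCommGroup X] [NormedSpace ℝ X] [CompleteSpace X]
    (x : ℕ → X) (f : ℕ → X →L[ℝ] ℝ)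
    (hx : ∀ i, x i ≠ 0) (hf : ∀ i, f i ≠ 0)
    (hframe : ∀ v : X,
      Tendsto (fun n => ∑ i ∈ Finset.range n, f i v • x i) atTop (𝓝 v)) :
    (∀ u : ℕ → X, IsNormalizedBlock x u → WeaklyNull u) ↔
      ((∀ m : ℕ, Tendsto (tailSupX x (f m)) atTop (𝓝 0)) ∧
        ∀ u : ℕ → X, (∀ n, ‖u n‖ ≤ 1) →
          (∀ m : ℕ, Tendsto (fun n => f m (u n)) atTop (𝓝 0)) → WeaklyNull u) :=
  schauderFrame_block_weaklyNull_iff_general x f hframe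
end

section
/- Let (x_i, f_i) be a Schauder frame of a Banach space X. Then the following are equivalent: (a) every normalized block sequence of (x_i) is weakly null; (b) the frame is locally shrinking and pre-shrinking; (c) the frame is locally shrinking and X* equals the closed linear span of (f_i)_{i∈ℕ}. -/
open Filter Topology

/-! Let `P n` be the partial-sum operators of the frame; they are uniformly bounded by some `C`
(Banach–Steinhaus), and `(g - g ∘ P n) v = g (v - P n v)` with `v - P n v` in the closed span of
the tail `(x i)_{i ≥ n}`, so `‖g - g ∘ P n‖ ≤ (1 + C) · tailSupX x g n`. If every normalized block
sequence is weakly null, then `tailSupX x g n → 0` for every functional `g`: otherwise normalized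
vectors from ever later tails on which `|g|` stays bounded below glue to a block sequence. This
gives pre-shrinking. Conversely, every `f m` tends to zero along a block sequence of a locally
shrinking frame, and the functionals tending to zero along a bounded sequence form a closed
subspace, which is everything when the `f m` span a dense subspace. -/

namespace SchauderFrame

variable {X : Type*} [NormedAddCommGroup X] [NormedSpace ℝ X]

section TailSup

variable (x : ℕ → X) (g : X →L[ℝ] ℝ)

lemma bddAbove_tailSupX_set (n : ℕ) :
    BddAbove ((fun z : X => |g z|) ''
      {z | z ∈ Submodule.span ℝ (x '' {i | n ≤ i}) ∧ ‖z‖ ≤ 1}) := by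
  refine ⟨‖g‖, ?_⟩
  rintro _ ⟨z, ⟨-, hz⟩, rfl⟩
  simpa using g.le_opNorm_of_le hz

lemma zero_mem_tailSupX_set (n : ℕ) :
    0 ∈ ((fun z : X => |g z|) ''
      {z | z ∈ Submodule.span ℝ (x '' {i | n ≤ i}) ∧ ‖z‖ ≤ 1}) :=
  ⟨0, ⟨Submodule.zero_mem _, by simp⟩, by simp⟩

lemma tailSupX_nonneg (n : ℕ) : 0 ≤ tailSupX x g n :=
  le_csSup (bddAbove_tailSupX_set x g n) (zero_mem_tailSupX_set x g n)

lemma tailSupX_antitone : Antitone (tailSupX x g) := by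
  intro a b hab
  refine csSup_le_csSup (bddAbove_tailSupX_set x g a) ⟨_, zero_mem_tailSupX_set x g b⟩ ?_
  rintro _ ⟨z, ⟨hz, hz1⟩, rfl⟩
  exact ⟨z, ⟨Submodule.span_mono (Set.image_mono fun i hi => hab.trans hi) hz, hz1⟩, rfl⟩

variable {x g}

lemma abs_apply_le_tailSupX_mul_norm {n : ℕ} {z : X}
    (hz : z ∈ Submodule.span ℝ (x '' {i | n ≤ i})) :
    |g z| ≤ tailSupX x g n * ‖z‖ := by
  rcases eq_or_ne z 0 with rfl | hz0
  · simp
  have hpos : 0 < ‖z‖ := norm_pos_iff.2 hz0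
  have hunit : |g (‖z‖⁻¹ • z)| ≤ tailSupX x g n := by
    refine le_csSup (bddAbove_tailSupX_set x g n) ⟨_, ⟨Submodule.smul_mem _ _ hz, ?_⟩, rfl⟩
    rw [norm_smul, norm_inv, norm_norm, inv_mul_cancel₀ hpos.ne']
  rw [map_smul, smul_eq_mul, abs_mul, abs_inv, abs_norm] at hunit
  rwa [← div_le_iff₀ hpos, div_eq_inv_mul]

lemma abs_apply_le_tailSupX_mul_norm_of_mem_closure {n : ℕ} {z : X}
    (hz : z ∈ closure (Submodule.span ℝ (x '' {i | n ≤ i}) : Set X)) :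
    |g z| ≤ tailSupX x g n * ‖z‖ :=
  closure_minimal (fun _ => abs_apply_le_tailSupX_mul_norm)
    (isClosed_le g.continuous.abs (continuous_const.mul continuous_norm)) hz

lemma exists_norm_eq_one_lt_abs_apply {n : ℕ} {δ : ℝ} (hδ : 0 ≤ δ)
    (h : δ < tailSupX x g n) :
    ∃ z ∈ Submodule.span ℝ (x '' {i | n ≤ i}), ‖z‖ = 1 ∧ δ < |g z| := by
  obtain ⟨_, ⟨z, ⟨hz, hz1⟩, rfl⟩, hδz⟩ :=
    exists_lt_of_lt_csSup ⟨_, zero_mem_tailSupX_set x g n⟩ h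
  have hz0 : z ≠ 0 := by
    rintro rfl
    simp only [map_zero, abs_zero] at hδz
    linarith
  have hpos : 0 < ‖z‖ := norm_pos_iff.2 hz0
  refine ⟨‖z‖⁻¹ • z, Submodule.smul_mem _ _ hz, ?_, ?_⟩
  · rw [norm_smul, norm_inv, norm_norm, inv_mul_cancel₀ hpos.ne']
  · rw [map_smul, smul_eq_mul, abs_mul, abs_inv, abs_norm]
    calc δ < |g z| := hδz
      _ ≤ ‖z‖⁻¹ * |g z| := le_mul_of_one_le_left (abs_nonneg _) ((one_le_inv₀ hpos).2 hz1)

end TailSup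

section Blocks

lemma exists_eq_sum_Icc_of_mem_span {x : ℕ → X} {n : ℕ} {z : X}
    (hz : z ∈ Submodule.span ℝ (x '' {i | n ≤ i})) :
    ∃ N, n ≤ N ∧ ∃ a : ℕ → ℝ, z = ∑ i ∈ Finset.Icc n N, a i • x i := by
  obtain ⟨l, hl, rfl⟩ := (Finsupp.mem_span_image_iff_linearCombination ℝ).1 hz
  refine ⟨n + l.support.sup id, le_self_add, l, ?_⟩
  rw [Finsupp.linearCombination_apply]
  refine Finsupp.sum_of_support_subset l (fun i hi => ?_) _ (by simp)
  exact Finset.mem_Icc.2 ⟨hl hi, (Finset.le_sup (f := id) hi).trans le_add_self⟩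

/-- The coefficient sequences glue since the intervals are disjoint: for `i ∈ [m k, n k]`,
`k` is the largest `j ≤ i` with `m j ≤ i`. -/
lemma isNormalizedBlock_of_blocks {x u : ℕ → X} (m n : ℕ → ℕ) (b : ℕ → ℕ → ℝ)
    (hmn : ∀ k, m k ≤ n k) (hnm : ∀ k, n k < m (k + 1))
    (hu : ∀ k, u k = ∑ i ∈ Finset.Icc (m k) (n k), b k i • x i) (hnorm : ∀ k, ‖u k‖ = 1) :
    IsNormalizedBlock x u := by
  have hmono : StrictMono m := strictMono_nat_of_lt_succ fun k => (hmn k).trans_lt (hnm k)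
  have hindex : ∀ k i, i ∈ Finset.Icc (m k) (n k) →
      Nat.findGreatest (fun j => m j ≤ i) i = k := by
    intro k i hi
    obtain ⟨hmi, hin⟩ := Finset.mem_Icc.1 hi
    refine Nat.findGreatest_eq_iff.2 ⟨hmono.le_apply.trans hmi, fun _ => hmi, fun j hkj _ hmj => ?_⟩
    have : m (k + 1) ≤ m j := hmono.monotone hkj
    have := hnm k
    omega
  refine ⟨m, n, fun i => b (Nat.findGreatest (fun j => m j ≤ i) i) i, hmn, hnm,
    fun k => (hu k).trans (Finset.sum_congr rfl fun i hi => ?_), hnorm⟩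
  simp only [hindex k i hi]

/-- The blocks are chosen one after the other, each starting beyond the end of the previous. -/
lemma exists_isNormalizedBlock_forall {x : ℕ → X} {p : X → Prop}
    (h : ∀ n, ∃ z ∈ Submodule.span ℝ (x '' {i | n ≤ i}), ‖z‖ = 1 ∧ p z) :
    ∃ u, IsNormalizedBlock x u ∧ ∀ k, p (u k) := by
  choose z hz hz1 hpz using h
  choose N hN b hb using fun n => exists_eq_sum_Icc_of_mem_span (hz n)
  let start : ℕ → ℕ := fun k => Nat.rec 0 (fun _ s => N s + 1) k
  refine ⟨fun k => z (start k), isNormalizedBlock_of_blocks start (fun k => N (start k))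
    (fun k => b (start k)) (fun k => hN _) (fun k => Nat.lt_succ_self _) (fun k => hb _)
    (fun k => hz1 _), fun k => hpz _⟩

lemma IsNormalizedBlock.norm_eq_one {x u : ℕ → X} (hu : IsNormalizedBlock x u) (k : ℕ) :
    ‖u k‖ = 1 := by
  obtain ⟨-, -, -, -, -, -, hnorm⟩ := hu
  exact hnorm k

lemma IsNormalizedBlock.tendsto_apply_zero {x u : ℕ → X} (hu : IsNormalizedBlock x u)
    {g : X →L[ℝ] ℝ} (hg : Tendsto (tailSupX x g) atTop (𝓝 0)) :
    Tendsto (fun k => g (u k)) atTop (𝓝 0) := by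
  obtain ⟨m, n, a, hmn, hnm, hsum, hnorm⟩ := hu
  have hm : Tendsto m atTop atTop :=
    (strictMono_nat_of_lt_succ fun k => (hmn k).trans_lt (hnm k)).tendsto_atTop
  refine squeeze_zero_norm (fun k => ?_) (hg.comp hm)
  have hmem : u k ∈ Submodule.span ℝ (x '' {i | m k ≤ i}) := by
    rw [hsum k]
    exact Submodule.sum_mem _ fun i hi => Submodule.smul_mem _ _
      (Submodule.subset_span ⟨i, (Finset.mem_Icc.1 hi).1, rfl⟩)
  simpa [hnorm k] using abs_apply_le_tailSupX_mul_norm (g := g) hmem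

end Blocks

section PartialSums

noncomputable def frameSum (x : ℕ → X) (f : ℕ → X →L[ℝ] ℝ) (n : ℕ) : X →L[ℝ] X :=
  ∑ i ∈ Finset.range n, (f i).smulRight (x i)

variable {x : ℕ → X} {f : ℕ → X →L[ℝ] ℝ}

lemma frameSum_apply (n : ℕ) (v : X) : frameSum x f n v = ∑ i ∈ Finset.range n, f i v • x i := by
  simp [frameSum]

lemma comp_frameSum (g : X →L[ℝ] ℝ) (n : ℕ) :
    g.comp (frameSum x f n) = ∑ i ∈ Finset.range n, g (x i) • f i := by
  ext v
  simp [frameSum_apply, mul_comm]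

variable (hframe : ∀ v : X,
  Tendsto (fun n => ∑ i ∈ Finset.range n, f i v • x i) atTop (𝓝 v))
include hframe

lemma exists_norm_frameSum_le [CompleteSpace X] : ∃ C, ∀ n, ‖frameSum x f n‖ ≤ C :=
  banach_steinhaus fun v => by
    obtain ⟨C, hC⟩ := (hframe v).norm.bddAbove_range
    exact ⟨C, fun n => by simpa [frameSum_apply] using hC (Set.mem_range_self n)⟩

lemma sub_frameSum_mem_closure_span (n : ℕ) (v : X) :
    v - frameSum x f n v ∈ closure (Submodule.span ℝ (x '' {i | n ≤ i}) : Set X) := by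
  refine mem_closure_of_tendsto ((hframe v).sub_const (frameSum x f n v)) ?_
  filter_upwards [eventually_ge_atTop n] with N hN
  rw [frameSum_apply, ← Finset.sum_Ico_eq_sub _ hN]
  exact Submodule.sum_mem _ fun i hi => Submodule.smul_mem _ _
    (Submodule.subset_span ⟨i, (Finset.mem_Ico.1 hi).1, rfl⟩)

lemma norm_sub_comp_frameSum_le {C : ℝ} (hC : ∀ n, ‖frameSum x f n‖ ≤ C)
    (g : X →L[ℝ] ℝ) (n : ℕ) :
    ‖g - g.comp (frameSum x f n)‖ ≤ tailSupX x g n * (1 + C) := by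
  have hC0 : 0 ≤ C := (norm_nonneg _).trans (hC 0)
  refine ContinuousLinearMap.opNorm_le_bound _
    (mul_nonneg (tailSupX_nonneg x g n) (by linarith)) fun v => ?_
  have htail : ‖v - frameSum x f n v‖ ≤ (1 + C) * ‖v‖ :=
    calc ‖v - frameSum x f n v‖ ≤ ‖v‖ + ‖frameSum x f n v‖ := norm_sub_le _ _
      _ ≤ ‖v‖ + C * ‖v‖ := by gcongr; exact (frameSum x f n).le_of_opNorm_le (hC n) v
      _ = (1 + C) * ‖v‖ := by ring
  calc ‖(g - g.comp (frameSum x f n)) v‖ = |g (v - frameSum x f n v)| := by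
        rw [map_sub]; rfl
    _ ≤ tailSupX x g n * ‖v - frameSum x f n v‖ :=
        abs_apply_le_tailSupX_mul_norm_of_mem_closure (sub_frameSum_mem_closure_span hframe n v)
    _ ≤ tailSupX x g n * (1 + C) * ‖v‖ := by
        rw [mul_assoc]; exact mul_le_mul_of_nonneg_left htail (tailSupX_nonneg x g n)

lemma tendsto_comp_frameSum [CompleteSpace X] {g : X →L[ℝ] ℝ}
    (hg : Tendsto (tailSupX x g) atTop (𝓝 0)) :
    Tendsto (fun n => g.comp (frameSum x f n)) atTop (𝓝 g) := by
  obtain ⟨C, hC⟩ := exists_norm_frameSum_le hframe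
  rw [tendsto_iff_norm_sub_tendsto_zero]
  refine squeeze_zero (fun _ => norm_nonneg _) (fun n => ?_) (by simpa using hg.mul_const (1 + C))
  rw [norm_sub_rev]
  exact norm_sub_comp_frameSum_le hframe hC g n

end PartialSums

lemma isClosed_setOf_tendsto_apply_zero {u : ℕ → X} {C : ℝ} (hu : ∀ k, ‖u k‖ ≤ C) :
    IsClosed {g : X →L[ℝ] ℝ | Tendsto (fun k => g (u k)) atTop (𝓝 0)} := by
  have hbound : ∃ C', ∀ k (g : X →L[ℝ] ℝ), ‖ContinuousLinearMap.apply ℝ ℝ (u k) g‖ ≤ C' * ‖g‖ :=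
    ⟨C, fun k g => by simpa [mul_comm] using g.le_opNorm_of_le (hu k)⟩
  have hequi : Equicontinuous fun k (g : X →L[ℝ] ℝ) => g (u k) :=
    ((NormedSpace.equicontinuous_TFAE fun k => ContinuousLinearMap.apply ℝ ℝ (u k)).out 3 1).1
      hbound
  exact hequi.isClosed_setOfPred_tendsto continuous_const

lemma weaklyNull_of_dense_span {ι : Type*} {u : ℕ → X} {C : ℝ} (hu : ∀ k, ‖u k‖ ≤ C)
    (φ : ι → X →L[ℝ] ℝ) (hφ : ∀ i, Tendsto (fun k => φ i (u k)) atTop (𝓝 0))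
    (hdense : closure (Submodule.span ℝ (Set.range φ) : Set (X →L[ℝ] ℝ)) = Set.univ) :
    WeaklyNull u := by
  have hspan : ∀ g ∈ Submodule.span ℝ (Set.range φ), Tendsto (fun k => g (u k)) atTop (𝓝 0) := by
    intro g hg
    induction hg using Submodule.span_induction with
    | mem _ hmem => obtain ⟨i, rfl⟩ := hmem; exact hφ i
    | zero => exact tendsto_const_nhds
    | add _ _ _ _ h₁ h₂ => simpa using h₁.add h₂
    | smul c _ _ h => simpa using h.const_mul c
  intro g
  exact closure_minimal hspan (isClosed_setOf_tendsto_apply_zero hu) (hdense ▸ Set.mem_univ g)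

lemma tendsto_tailSupX_of_forall_weaklyNull {x : ℕ → X}
    (h : ∀ u : ℕ → X, IsNormalizedBlock x u → WeaklyNull u) (g : X →L[ℝ] ℝ) :
    Tendsto (tailSupX x g) atTop (𝓝 0) := by
  have hbdd : BddBelow (Set.range (tailSupX x g)) :=
    ⟨0, by rintro _ ⟨n, rfl⟩; exact tailSupX_nonneg x g n⟩
  have hlim := tendsto_atTop_ciInf (tailSupX_antitone x g) hbdd
  suffices hinf : ⨅ n, tailSupX x g n ≤ 0 by
    rwa [le_antisymm hinf (le_ciInf (tailSupX_nonneg x g))] at hlim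
  by_contra! hpos
  obtain ⟨δ, hδ, hδlt⟩ : ∃ δ, 0 < δ ∧ ∀ n, δ < tailSupX x g n :=
    ⟨_, half_pos hpos, fun n => (half_lt_self hpos).trans_le (ciInf_le hbdd n)⟩
  obtain ⟨u, hu, hgu⟩ := exists_isNormalizedBlock_forall fun n =>
    exists_norm_eq_one_lt_abs_apply hδ.le (hδlt n)
  obtain ⟨k, hk⟩ := ((h u hu g).abs.eventually (gt_mem_nhds (by simpa using hδ))).exists
  exact (hgu k).not_gt hk

end SchauderFrame

open SchauderFrame

theorem schauderFrame_shrinking_tfae_general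
    {X : Type*} [NormedAddCommGroup X] [NormedSpace ℝ X] [CompleteSpace X]
    (x : ℕ → X) (f : ℕ → X →L[ℝ] ℝ)
    (hframe : ∀ v : X,
      Tendsto (fun n => ∑ i ∈ Finset.range n, f i v • x i) atTop (𝓝 v)) :
    List.TFAE
      [ (∀ u : ℕ → X, IsNormalizedBlock x u → WeaklyNull u),
        ((∀ m : ℕ, Tendsto (tailSupX x (f m)) atTop (𝓝 0)) ∧
          ∀ g : X →L[ℝ] ℝ,
            Tendsto (fun n => ∑ i ∈ Finset.range n, g (x i) • f i) atTop (𝓝 g)),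
        ((∀ m : ℕ, Tendsto (tailSupX x (f m)) atTop (𝓝 0)) ∧
          closure ((Submodule.span ℝ (Set.range f) : Submodule ℝ (X →L[ℝ] ℝ)) :
            Set (X →L[ℝ] ℝ)) = Set.univ) ] := by
  tfae_have 1 → 2 := fun h => by
    have hshrink := tendsto_tailSupX_of_forall_weaklyNull h
    refine ⟨fun m => hshrink (f m), fun g => ?_⟩
    simpa only [comp_frameSum] using tendsto_comp_frameSum hframe (hshrink g)
  tfae_have 2 → 3 := fun ⟨hloc, hpre⟩ => by
    refine ⟨hloc, Set.eq_univ_of_forall fun g => mem_closure_of_tendsto (hpre g) ?_⟩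
    exact Eventually.of_forall fun n => Submodule.sum_mem _ fun i _ =>
      Submodule.smul_mem _ _ (Submodule.subset_span ⟨i, rfl⟩)
  tfae_have 3 → 1 := fun ⟨hloc, hdense⟩ u hu =>
    weaklyNull_of_dense_span (fun k => (hu.norm_eq_one k).le) f
      (fun m => hu.tendsto_apply_zero (hloc m)) hdense
  tfae_finish

/-- Let `(x i, f i)` be a Schauder frame of a Banach space `X`. TFAE:
(a) every normalized block sequence of `(x i)` is weakly null;
(b) the frame is locally shrinking and pre-shrinking;
(c) the frame is locally shrinking and `X*` is the closed linear span of `(f i)`. -/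
theorem schauderFrame_shrinking_tfae
    {X : Type*} [NormedAddCommGroup X] [NormedSpace ℝ X] [CompleteSpace X]
    (x : ℕ → X) (f : ℕ → X →L[ℝ] ℝ)
    (hx : ∀ i, x i ≠ 0) (hf : ∀ i, f i ≠ 0)
    (hframe : ∀ v : X,
      Tendsto (fun n => ∑ i ∈ Finset.range n, f i v • x i) atTop (𝓝 v)) :
    List.TFAE
      [ (∀ u : ℕ → X, IsNormalizedBlock x u → WeaklyNull u),
        ((∀ m : ℕ, Tendsto (tailSupX x (f m)) atTop (𝓝 0)) ∧
          ∀ g : X →L[ℝ] ℝ,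
            Tendsto (fun n => ∑ i ∈ Finset.range n, g (x i) • f i) atTop (𝓝 g)),
        ((∀ m : ℕ, Tendsto (tailSupX x (f m)) atTop (𝓝 0)) ∧
          closure ((Submodule.span ℝ (Set.range f) : Submodule ℝ (X →L[ℝ] ℝ)) :
            Set (X →L[ℝ] ℝ)) = Set.univ) ] :=
  schauderFrame_shrinking_tfae_general x f hframe
end

section
/- Let (x_i, f_i) be a Schauder frame of a Banach space X and let Y denote the closed linear span of (f_i)_{i∈ℕ} in X*. Then the following are equivalent: (a) the frame is locally shrinking, and for every x** ∈ X**, sup{ |x**(f)| : f ∈ span(f_i : i ≥ n), ‖f‖ ≤ 1 } → 0 as n → ∞; (b) the frame is locally shrinking, locally boundedly complete and pre-boundedly complete; (c) the frame is locally shrinking and locally boundedly complete, and for every x** ∈ X** there exists x ∈ X such that g(x) = lim_{n→∞} g(Σ_{i=1}^n x**(f_i) x_i) for every g ∈ Y; (d) the frame is locally shrinking and locally boundedly complete, and the canonical map J : X → Y* defined by J(x)(f) = f(x) is an isomorphism of X onto Y*. -/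
open Filter Topology

/-- `sup { |F g| : g ∈ span (f i : i ≥ n), ‖g‖ ≤ 1 }`, for `F ∈ X**`. -/
noncomputable def tailSupBidual {X : Type*} [NormedAddCommGroup X] [NormedSpace ℝ X]
    (f : ℕ → X →L[ℝ] ℝ) (F : (X →L[ℝ] ℝ) →L[ℝ] ℝ) (n : ℕ) : ℝ :=
  sSup ((fun g : X →L[ℝ] ℝ => |F g|) ''
    {g | g ∈ Submodule.span ℝ (f '' {i | n ≤ i}) ∧ ‖g‖ ≤ 1})

/-- Helper instance (port): the topology of bounded convergence on the dual of a subspace of `X*`,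
which instance search no longer finds by itself (it is `ContinuousLinearMap.topologicalSpace`). -/
noncomputable instance instTopologicalSpaceDualOfSubmoduleDual {X : Type*} [NormedAddCommGroup X]
    [NormedSpace ℝ X] (S : Submodule ℝ (X →L[ℝ] ℝ)) : TopologicalSpace (↥S →L[ℝ] ℝ) :=
  @ContinuousLinearMap.topologicalSpace ℝ ℝ _ _ (RingHom.id ℝ) S ℝ _ _ _ _ _ _ _

/-!
By Banach–Steinhaus the partial-sum operators `T n = ∑_{i<n} f i ⊗ x i` are bounded by some `C`.
Hence the vectors on which a tail quantity tends to zero form a closed subspace: local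
shrinking puts every `f m` into `{g | g ∘ T n → g}`, so this set contains `Y`; local bounded
completeness puts every `x m` into `{v | tailSupF f v → 0}`, which is then all of `X`.
For `F ∈ X**` and `h ∈ X*`, `h (∑_{n ≤ i < m} F (f i) • x i) = F (h ∘ T m - h ∘ T n)`, and
`h ∘ T m - h ∘ T n` lies in `span (f i : i ≥ n)` with norm `≤ 2 C ‖h‖`; so (a) makes the partial
sums Cauchy. In (c), `J` is injective by the frame expansion and onto `Y*`: extend `φ ∈ Y*` to
`F ∈ X**` by Hahn–Banach, and the `v` given by (c) satisfies
`g v = lim F (g ∘ T n) = F g` on `Y`. Conversely, under (d) `F|_Y = J v` for some `v`, so the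
tail norms of `F` are those of `v`.
-/

/- As for `instTopologicalSpaceDualOfSubmoduleDual`, instance search does not find the normed
structure on the dual of a subspace of `X*` by itself. -/
noncomputable instance instNormedAddCommGroupDualOfSubmoduleDual {X : Type*}
    [NormedAddCommGroup X] [NormedSpace ℝ X] (S : Submodule ℝ (X →L[ℝ] ℝ)) :
    NormedAddCommGroup (↥S →L[ℝ] ℝ) :=
  ContinuousLinearMap.toNormedAddCommGroup (𝕜 := ℝ) (𝕜₂ := ℝ) (E := ↥S) (F := ℝ)
    (σ₁₂ := RingHom.id ℝ)

noncomputable instance instNormedSpaceDualOfSubmoduleDual {X : Type*}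
    [NormedAddCommGroup X] [NormedSpace ℝ X] (S : Submodule ℝ (X →L[ℝ] ℝ)) :
    NormedSpace ℝ (↥S →L[ℝ] ℝ) :=
  ContinuousLinearMap.toNormedSpace (𝕜 := ℝ) (𝕜₂ := ℝ) (E := ↥S) (F := ℝ)
    (σ₁₂ := RingHom.id ℝ)

instance instCompleteSpaceDualOfSubmoduleDual {X : Type*}
    [NormedAddCommGroup X] [NormedSpace ℝ X] (S : Submodule ℝ (X →L[ℝ] ℝ)) :
    CompleteSpace (↥S →L[ℝ] ℝ) :=
  ContinuousLinearMap.instCompleteSpace (𝕜₁ := ℝ) (𝕜₂ := ℝ) (σ := RingHom.id ℝ) (E := ↥S)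
    (F := ℝ)

section TendstoZero

variable {ι E : Type*} {F : ι → Type*} [NormedAddCommGroup E] [NormedSpace ℝ E]
  [∀ i, NormedAddCommGroup (F i)] [∀ i, NormedSpace ℝ (F i)]

def tendstoZeroSubmodule (L : ∀ i, E →L[ℝ] F i) (l : Filter ι) : Submodule ℝ E where
  carrier := {v | Tendsto (fun i => ‖L i v‖) l (𝓝 0)}
  zero_mem' := by simpa using tendsto_const_nhds
  add_mem' {v w} hv hw := by
    refine squeeze_zero (fun _ => norm_nonneg _) (fun i => ?_) (by simpa using hv.add hw)
    simpa only [map_add] using norm_add_le (L i v) (L i w)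
  smul_mem' c v hv := by simpa [norm_smul] using hv.const_mul ‖c‖

theorem mem_tendstoZeroSubmodule {L : ∀ i, E →L[ℝ] F i} {l : Filter ι} {v : E} :
    v ∈ tendstoZeroSubmodule L l ↔ Tendsto (fun i => ‖L i v‖) l (𝓝 0) :=
  Iff.rfl

theorem isClosed_tendstoZeroSubmodule {L : ∀ i, E →L[ℝ] F i} {C : ℝ} (hL : ∀ i, ‖L i‖ ≤ C)
    (l : Filter ι) : IsClosed (tendstoZeroSubmodule L l : Set E) := by
  have hLip : ∀ i, LipschitzWith C.toNNReal fun v => ‖L i v‖ := fun i => by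
    have hK : ‖L i‖₊ ≤ C.toNNReal := by
      rw [← NNReal.coe_le_coe, coe_nnnorm]
      exact (hL i).trans (Real.le_coe_toNNReal C)
    simpa [Function.comp_def] using lipschitzWith_one_norm.comp ((L i).lipschitz.weaken hK)
  exact (LipschitzWith.uniformEquicontinuous _ _ hLip).equicontinuous.isClosed_setOfPred_tendsto
    continuous_const

end TendstoZero

theorem sSup_abs_image_eq_norm_comp_subtypeL {E : Type*} [NormedAddCommGroup E]
    [NormedSpace ℝ E] (φ : E →L[ℝ] ℝ) (p : Submodule ℝ E) :
    sSup ((fun a : E => |φ a|) '' {a | a ∈ p ∧ ‖a‖ ≤ 1}) = ‖φ.comp p.subtypeL‖ := by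
  rw [← ContinuousLinearMap.sSup_unitClosedBall_eq_norm]
  congr 1
  ext r
  simp only [Set.mem_image, Metric.mem_closedBall, dist_zero_right, Real.norm_eq_abs,
    Subtype.exists, Set.mem_ofPred_eq, ContinuousLinearMap.comp_apply, Submodule.subtypeL_apply,
    Submodule.coe_norm, exists_prop]
  exact exists_congr fun a => by tauto

theorem norm_apply_le_norm_comp_subtypeL {E F : Type*} [NormedAddCommGroup E] [NormedSpace ℝ E]
    [NormedAddCommGroup F] [NormedSpace ℝ F] (φ : E →L[ℝ] F) {p : Submodule ℝ E} {a : E}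
    (ha : a ∈ p) : ‖φ a‖ ≤ ‖φ.comp p.subtypeL‖ * ‖a‖ :=
  (φ.comp p.subtypeL).le_opNorm ⟨a, ha⟩

section Tails

variable {X : Type*} [NormedAddCommGroup X] [NormedSpace ℝ X]

def tailSpan {M : Type*} [AddCommMonoid M] [Module ℝ M] (s : ℕ → M) (n : ℕ) : Submodule ℝ M :=
  Submodule.span ℝ (s '' {i | n ≤ i})

theorem tailSpan_le_span_range {M : Type*} [AddCommMonoid M] [Module ℝ M] (s : ℕ → M) (n : ℕ) :
    tailSpan s n ≤ Submodule.span ℝ (Set.range s) :=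
  Submodule.span_mono (Set.image_subset_range _ _)

noncomputable def dualEval (S : Submodule ℝ (X →L[ℝ] ℝ)) : X →L[ℝ] (↥S →L[ℝ] ℝ) :=
  LinearMap.mkContinuous (E := X) (F := ↥S →L[ℝ] ℝ)
    { toFun := fun v => (NormedSpace.inclusionInDoubleDual ℝ X v).comp S.subtypeL
      map_add' := fun v w => by ext; simp
      map_smul' := fun c v => by ext; simp } 1
    fun v => ContinuousLinearMap.opNorm_le_bound _ (by positivity) fun g => by
      simpa [mul_comm] using (g : X →L[ℝ] ℝ).le_opNorm v

@[simp]
theorem dualEval_apply (S : Submodule ℝ (X →L[ℝ] ℝ)) (v : X) (g : S) :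
    dualEval S v g = (g : X →L[ℝ] ℝ) v :=
  rfl

theorem norm_dualEval_le (S : Submodule ℝ (X →L[ℝ] ℝ)) : ‖dualEval S‖ ≤ 1 :=
  LinearMap.mkContinuous_norm_le _ zero_le_one _

theorem tailSupX_eq_norm (x : ℕ → X) (g : X →L[ℝ] ℝ) (n : ℕ) :
    tailSupX x g n = ‖g.comp (tailSpan x n).subtypeL‖ :=
  sSup_abs_image_eq_norm_comp_subtypeL g _

theorem tailSupBidual_eq_norm (f : ℕ → X →L[ℝ] ℝ) (F : (X →L[ℝ] ℝ) →L[ℝ] ℝ) (n : ℕ) :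
    tailSupBidual f F n = ‖F.comp (tailSpan f n).subtypeL‖ :=
  sSup_abs_image_eq_norm_comp_subtypeL F _

theorem tailSupF_eq_norm_dualEval (f : ℕ → X →L[ℝ] ℝ) (v : X) :
    tailSupF f v = fun n => ‖dualEval (tailSpan f n) v‖ :=
  funext fun _ => sSup_abs_image_eq_norm_comp_subtypeL (NormedSpace.inclusionInDoubleDual ℝ X v) _

theorem tailSupF_eq_tailSupBidual (f : ℕ → X →L[ℝ] ℝ) (v : X) :
    tailSupF f v = tailSupBidual f (NormedSpace.inclusionInDoubleDual ℝ X v) :=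
  rfl

theorem tailSupBidual_eq_tailSupF_of_apply_eq {f : ℕ → X →L[ℝ] ℝ} {F : (X →L[ℝ] ℝ) →L[ℝ] ℝ} {v : X}
    (hFv : ∀ g ∈ Submodule.span ℝ (Set.range f), F g = g v) :
    tailSupBidual f F = tailSupF f v := by
  funext n
  refine congrArg sSup (Set.image_congr fun g hg => ?_)
  rw [hFv g (tailSpan_le_span_range f n hg.1)]

theorem exists_continuousLinearEquiv_dualEval [CompleteSpace X] {S : Submodule ℝ (X →L[ℝ] ℝ)}
    (hS : Function.Bijective (dualEval S)) :
    ∃ e : X ≃L[ℝ] (↥S →L[ℝ] ℝ), ∀ (v : X) (g : S), e v g = (g : X →L[ℝ] ℝ) v :=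
  ⟨ContinuousLinearEquiv.ofBijective (dualEval S) (LinearMap.ker_eq_bot.2 hS.1)
    (LinearMap.range_eq_top.2 hS.2), fun _ _ => rfl⟩

end Tails

section PartialSums

variable {X : Type*} [NormedAddCommGroup X] [NormedSpace ℝ X]

def HasFrameExpansion (x : ℕ → X) (f : ℕ → X →L[ℝ] ℝ) : Prop :=
  ∀ v : X, Tendsto (fun n => ∑ i ∈ Finset.range n, f i v • x i) atTop (𝓝 v)

variable (x : ℕ → X) (f : ℕ → X →L[ℝ] ℝ)

noncomputable def framePartialSum (n : ℕ) : X →L[ℝ] X :=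
  ∑ i ∈ Finset.range n, (f i).smulRight (x i)

@[simp]
theorem framePartialSum_apply (n : ℕ) (v : X) :
    framePartialSum x f n v = ∑ i ∈ Finset.range n, f i v • x i := by
  simp [framePartialSum]

theorem comp_framePartialSum (g : X →L[ℝ] ℝ) (n : ℕ) :
    g.comp (framePartialSum x f n) = ∑ i ∈ Finset.range n, g (x i) • f i := by
  ext v
  simp [mul_comm]

theorem apply_sum_bidual_smul (F : (X →L[ℝ] ℝ) →L[ℝ] ℝ) (g : X →L[ℝ] ℝ) (n : ℕ) :
    g (∑ i ∈ Finset.range n, F (f i) • x i) = F (g.comp (framePartialSum x f n)) := by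
  simp [comp_framePartialSum, mul_comm]

theorem framePartialSum_sub_mem_tailSpan {m n : ℕ} (hmn : m ≤ n) (v : X) :
    framePartialSum x f n v - framePartialSum x f m v ∈ tailSpan x m := by
  rw [framePartialSum_apply, framePartialSum_apply, ← Finset.sum_Ico_eq_sub _ hmn]
  exact Submodule.sum_mem _ fun i hi =>
    Submodule.smul_mem _ _ (Submodule.subset_span ⟨i, (Finset.mem_Ico.mp hi).1, rfl⟩)

theorem comp_framePartialSum_sub_mem_tailSpan {m n : ℕ} (hmn : m ≤ n) (g : X →L[ℝ] ℝ) :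
    g.comp (framePartialSum x f n) - g.comp (framePartialSum x f m) ∈ tailSpan f m := by
  rw [comp_framePartialSum, comp_framePartialSum, ← Finset.sum_Ico_eq_sub _ hmn]
  exact Submodule.sum_mem _ fun i hi =>
    Submodule.smul_mem _ _ (Submodule.subset_span ⟨i, (Finset.mem_Ico.mp hi).1, rfl⟩)

variable {x f}

theorem HasFrameExpansion.tendsto_framePartialSum (hframe : HasFrameExpansion x f) (v : X) :
    Tendsto (fun n => framePartialSum x f n v) atTop (𝓝 v) := by
  simpa using hframe v

theorem HasFrameExpansion.exists_norm_framePartialSum_le [CompleteSpace X]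
    (hframe : HasFrameExpansion x f) : ∃ C, ∀ n, ‖framePartialSum x f n‖ ≤ C :=
  banach_steinhaus fun v =>
    ((hframe.tendsto_framePartialSum v).norm.bddAbove_range).imp fun _ hC n => hC ⟨n, rfl⟩

theorem HasFrameExpansion.mem_topologicalClosure_span_range (hframe : HasFrameExpansion x f)
    (v : X) : v ∈ (Submodule.span ℝ (Set.range x)).topologicalClosure :=
  mem_closure_of_tendsto (hframe v) <| Eventually.of_forall fun _ =>
    Submodule.sum_mem _ fun i _ => Submodule.smul_mem _ _ (Submodule.subset_span ⟨i, rfl⟩)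

end PartialSums

section Frame

variable {X : Type*} [NormedAddCommGroup X] [NormedSpace ℝ X] {x : ℕ → X} {f : ℕ → X →L[ℝ] ℝ}

theorem HasFrameExpansion.norm_comp_framePartialSum_sub_le (hframe : HasFrameExpansion x f)
    {C : ℝ} (hC : ∀ n, ‖framePartialSum x f n‖ ≤ C) (g : X →L[ℝ] ℝ) (n : ℕ) :
    ‖g.comp (framePartialSum x f n) - g‖ ≤ 2 * C * tailSupX x g n := by
  have hC0 : 0 ≤ C := (norm_nonneg _).trans (hC 0)
  rw [tailSupX_eq_norm]
  refine ContinuousLinearMap.opNorm_le_bound _ (by positivity) fun z => ?_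
  set T := framePartialSum x f
  -- `z - T n z` is the limit of `T k z - T n z ∈ tailSpan x n`
  have hlim : Tendsto (fun k => g (T k z - T n z)) atTop (𝓝 (g (z - T n z))) :=
    (g.continuous.tendsto _).comp ((hframe.tendsto_framePartialSum z).sub_const (T n z))
  have hz : ‖(g.comp (T n) - g) z‖ = ‖g (z - T n z)‖ := by
    rw [sub_apply, ContinuousLinearMap.comp_apply, map_sub, norm_sub_rev]
  rw [hz]
  refine le_of_tendsto hlim.norm (eventually_atTop.2 ⟨n, fun k hk => ?_⟩)
  calc ‖g (T k z - T n z)‖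
      ≤ ‖g.comp (tailSpan x n).subtypeL‖ * ‖T k z - T n z‖ :=
        norm_apply_le_norm_comp_subtypeL g (framePartialSum_sub_mem_tailSpan x f hk z)
    _ ≤ ‖g.comp (tailSpan x n).subtypeL‖ * (C * ‖z‖ + C * ‖z‖) := by
        gcongr
        exact (norm_sub_le _ _).trans (add_le_add ((T k).le_of_opNorm_le (hC k) z)
          ((T n).le_of_opNorm_le (hC n) z))
    _ = 2 * C * ‖g.comp (tailSpan x n).subtypeL‖ * ‖z‖ := by ring

theorem HasFrameExpansion.tendsto_comp_framePartialSum [CompleteSpace X]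
    (hframe : HasFrameExpansion x f) (hshr : ∀ m, Tendsto (tailSupX x (f m)) atTop (𝓝 0))
    {g : X →L[ℝ] ℝ} (hg : g ∈ (Submodule.span ℝ (Set.range f)).topologicalClosure) :
    Tendsto (fun n => g.comp (framePartialSum x f n)) atTop (𝓝 g) := by
  obtain ⟨C, hC⟩ := hframe.exists_norm_framePartialSum_le
  let L : ℕ → (X →L[ℝ] ℝ) →L[ℝ] (X →L[ℝ] ℝ) := fun n =>
    (ContinuousLinearMap.compL ℝ X X ℝ).flip (framePartialSum x f n) - ContinuousLinearMap.id ℝ _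
  have hL : ∀ n, ‖L n‖ ≤ C + 1 := fun n => by
    have hC0 : 0 ≤ C := (norm_nonneg _).trans (hC n)
    refine (L n).opNorm_le_bound (by positivity) fun h => ?_
    calc ‖h.comp (framePartialSum x f n) - h‖
        ≤ ‖h.comp (framePartialSum x f n)‖ + ‖h‖ := norm_sub_le _ _
      _ ≤ ‖h‖ * C + ‖h‖ := by
          gcongr
          exact (h.opNorm_comp_le _).trans (mul_le_mul_of_nonneg_left (hC n) (norm_nonneg _))
      _ = (C + 1) * ‖h‖ := by ring
  have hspan : Submodule.span ℝ (Set.range f) ≤ tendstoZeroSubmodule L atTop :=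
    Submodule.span_le.2 <| Set.range_subset_iff.2 fun m =>
      squeeze_zero (fun _ => norm_nonneg _) (hframe.norm_comp_framePartialSum_sub_le hC (f m))
        (by simpa using (hshr m).const_mul (2 * C))
  exact tendsto_iff_norm_sub_tendsto_zero.2 <| Submodule.topologicalClosure_minimal _ hspan
    (isClosed_tendstoZeroSubmodule hL atTop) hg

theorem norm_sum_bidual_smul_sub_le {C : ℝ} (hC : ∀ n, ‖framePartialSum x f n‖ ≤ C)
    (F : (X →L[ℝ] ℝ) →L[ℝ] ℝ) {N m n : ℕ} (hm : N ≤ m) (hn : N ≤ n) :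
    ‖∑ i ∈ Finset.range m, F (f i) • x i - ∑ i ∈ Finset.range n, F (f i) • x i‖
      ≤ 2 * C * tailSupBidual f F N := by
  have hC0 : 0 ≤ C := (norm_nonneg _).trans (hC 0)
  rw [tailSupBidual_eq_norm]
  refine NormedSpace.norm_le_dual_bound ℝ _ (by positivity) fun h => ?_
  set w := h.comp (framePartialSum x f m) - h.comp (framePartialSum x f n)
  have hw : w ∈ tailSpan f N := by
    have := sub_mem (comp_framePartialSum_sub_mem_tailSpan x f hm h)
      (comp_framePartialSum_sub_mem_tailSpan x f hn h)
    rwa [sub_sub_sub_cancel_right] at this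
  have hwC : ‖w‖ ≤ ‖h‖ * C + ‖h‖ * C :=
    (norm_sub_le _ _).trans (add_le_add
      ((h.opNorm_comp_le _).trans (mul_le_mul_of_nonneg_left (hC m) (norm_nonneg _)))
      ((h.opNorm_comp_le _).trans (mul_le_mul_of_nonneg_left (hC n) (norm_nonneg _))))
  calc ‖h (∑ i ∈ Finset.range m, F (f i) • x i - ∑ i ∈ Finset.range n, F (f i) • x i)‖
      = ‖F w‖ := by rw [map_sub, apply_sum_bidual_smul, apply_sum_bidual_smul, map_sub]
    _ ≤ ‖F.comp (tailSpan f N).subtypeL‖ * ‖w‖ := norm_apply_le_norm_comp_subtypeL F hw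
    _ ≤ ‖F.comp (tailSpan f N).subtypeL‖ * (‖h‖ * C + ‖h‖ * C) := by gcongr
    _ = 2 * C * ‖F.comp (tailSpan f N).subtypeL‖ * ‖h‖ := by ring

theorem cauchySeq_sum_bidual_smul {C : ℝ} (hC : ∀ n, ‖framePartialSum x f n‖ ≤ C)
    {F : (X →L[ℝ] ℝ) →L[ℝ] ℝ} (hF : Tendsto (tailSupBidual f F) atTop (𝓝 0)) :
    CauchySeq fun n => ∑ i ∈ Finset.range n, F (f i) • x i :=
  cauchySeq_of_le_tendsto_0 _
    (fun m n _ hm hn => (dist_eq_norm _ _).trans_le (norm_sum_bidual_smul_sub_le hC F hm hn))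
    (by simpa using hF.const_mul (2 * C))

theorem HasFrameExpansion.tendsto_tailSupF_zero (hframe : HasFrameExpansion x f)
    (hlbc : ∀ m, Tendsto (tailSupF f (x m)) atTop (𝓝 0)) (v : X) :
    Tendsto (tailSupF f v) atTop (𝓝 0) := by
  have hspan : Submodule.span ℝ (Set.range x)
      ≤ tendstoZeroSubmodule (fun n => dualEval (tailSpan f n)) atTop :=
    Submodule.span_le.2 <| Set.range_subset_iff.2 fun m =>
      mem_tendstoZeroSubmodule.2 (by simpa only [tailSupF_eq_norm_dualEval] using hlbc m)
  have := Submodule.topologicalClosure_minimal _ hspan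
    (isClosed_tendstoZeroSubmodule (fun n => norm_dualEval_le _) atTop)
    (hframe.mem_topologicalClosure_span_range v)
  rw [tailSupF_eq_norm_dualEval]
  exact this

theorem HasFrameExpansion.dualEval_injective (hframe : HasFrameExpansion x f)
    {S : Submodule ℝ (X →L[ℝ] ℝ)} (hfS : ∀ i, f i ∈ S) : Function.Injective (dualEval S) := by
  refine (injective_iff_map_eq_zero _).2 fun v hv => ?_
  have hfv : ∀ i, f i v = 0 := fun i => by simpa using DFunLike.congr_fun hv ⟨f i, hfS i⟩
  exact tendsto_nhds_unique (hframe v) (by simp [hfv])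

theorem HasFrameExpansion.dualEval_surjective [CompleteSpace X] (hframe : HasFrameExpansion x f)
    (hshr : ∀ m, Tendsto (tailSupX x (f m)) atTop (𝓝 0))
    (hlim : ∀ F : (X →L[ℝ] ℝ) →L[ℝ] ℝ, ∃ v : X,
      ∀ g ∈ (Submodule.span ℝ (Set.range f)).topologicalClosure,
        Tendsto (fun n => g (∑ i ∈ Finset.range n, F (f i) • x i)) atTop (𝓝 (g v))) :
    Function.Surjective (dualEval (Submodule.span ℝ (Set.range f)).topologicalClosure) := by
  intro φ
  obtain ⟨F, hF, -⟩ := exists_extension_norm_eq _ φ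
  obtain ⟨v, hv⟩ := hlim F
  refine ⟨v, ContinuousLinearMap.ext fun g => ?_⟩
  rw [dualEval_apply, ← hF g]
  refine tendsto_nhds_unique (hv g g.2) ?_
  simp_rw [apply_sum_bidual_smul]
  exact (F.continuous.tendsto g).comp (hframe.tendsto_comp_framePartialSum hshr g.2)

theorem HasFrameExpansion.tendsto_tailSupBidual_zero (hframe : HasFrameExpansion x f)
    (hlbc : ∀ m, Tendsto (tailSupF f (x m)) atTop (𝓝 0))
    (e : X ≃L[ℝ] (↥((Submodule.span ℝ (Set.range f)).topologicalClosure) →L[ℝ] ℝ))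
    (he : ∀ (v : X) (g : ↥((Submodule.span ℝ (Set.range f)).topologicalClosure)),
      e v g = (g : X →L[ℝ] ℝ) v)
    (F : (X →L[ℝ] ℝ) →L[ℝ] ℝ) : Tendsto (tailSupBidual f F) atTop (𝓝 0) := by
  set v := e.symm (F.comp (Submodule.span ℝ (Set.range f)).topologicalClosure.subtypeL)
  have hFv : ∀ g ∈ Submodule.span ℝ (Set.range f), F g = g v := fun g hg => by
    rw [← he v ⟨g, Submodule.le_topologicalClosure _ hg⟩, e.apply_symm_apply]
    rfl
  rw [tailSupBidual_eq_tailSupF_of_apply_eq hFv]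
  exact hframe.tendsto_tailSupF_zero hlbc v

end Frame

theorem schauderFrame_boundedlyComplete_tfae_general
    {X : Type*} [NormedAddCommGroup X] [NormedSpace ℝ X] [CompleteSpace X]
    (x : ℕ → X) (f : ℕ → X →L[ℝ] ℝ)
    (hframe : ∀ v : X,
      Tendsto (fun n => ∑ i ∈ Finset.range n, f i v • x i) atTop (𝓝 v)) :
    List.TFAE
      [ ((∀ m : ℕ, Tendsto (tailSupX x (f m)) atTop (𝓝 0)) ∧
          ∀ F : (X →L[ℝ] ℝ) →L[ℝ] ℝ, Tendsto (tailSupBidual f F) atTop (𝓝 0)),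
        ((∀ m : ℕ, Tendsto (tailSupX x (f m)) atTop (𝓝 0)) ∧
          (∀ m : ℕ, Tendsto (tailSupF f (x m)) atTop (𝓝 0)) ∧
          ∀ F : (X →L[ℝ] ℝ) →L[ℝ] ℝ, ∃ v : X,
            Tendsto (fun n => ∑ i ∈ Finset.range n, F (f i) • x i) atTop (𝓝 v)),
        ((∀ m : ℕ, Tendsto (tailSupX x (f m)) atTop (𝓝 0)) ∧
          (∀ m : ℕ, Tendsto (tailSupF f (x m)) atTop (𝓝 0)) ∧
          ∀ F : (X →L[ℝ] ℝ) →L[ℝ] ℝ, ∃ v : X,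
            ∀ g ∈ (Submodule.span ℝ (Set.range f)).topologicalClosure,
              Tendsto (fun n => g (∑ i ∈ Finset.range n, F (f i) • x i)) atTop
                (𝓝 (g v))),
        ((∀ m : ℕ, Tendsto (tailSupX x (f m)) atTop (𝓝 0)) ∧
          (∀ m : ℕ, Tendsto (tailSupF f (x m)) atTop (𝓝 0)) ∧
          ∃ e : X ≃L[ℝ]
              (↥((Submodule.span ℝ (Set.range f)).topologicalClosure) →L[ℝ] ℝ),
            ∀ (v : X) (g : ↥((Submodule.span ℝ (Set.range f)).topologicalClosure)),
              e v g = (g : X →L[ℝ] ℝ) v) ] := by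
  have hframe : HasFrameExpansion x f := hframe
  tfae_have 1 → 2
  | ⟨hshr, hbidual⟩ => by
    obtain ⟨C, hC⟩ := hframe.exists_norm_framePartialSum_le
    refine ⟨hshr, fun m => ?_,
      fun F => cauchySeq_tendsto_of_complete (cauchySeq_sum_bidual_smul hC (hbidual F))⟩
    rw [tailSupF_eq_tailSupBidual]
    exact hbidual _
  tfae_have 2 → 3
  | ⟨hshr, hlbc, hpbc⟩ => ⟨hshr, hlbc, fun F =>
      (hpbc F).imp fun v hv g _ => (g.continuous.tendsto v).comp hv⟩
  tfae_have 3 → 4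
  | ⟨hshr, hlbc, hlim⟩ => by
    have hf : ∀ i, f i ∈ (Submodule.span ℝ (Set.range f)).topologicalClosure := fun i =>
      Submodule.le_topologicalClosure _ (Submodule.subset_span ⟨i, rfl⟩)
    exact ⟨hshr, hlbc, exists_continuousLinearEquiv_dualEval
      ⟨hframe.dualEval_injective hf, hframe.dualEval_surjective hshr hlim⟩⟩
  tfae_have 4 → 1
  | ⟨hshr, hlbc, e, he⟩ => ⟨hshr, hframe.tendsto_tailSupBidual_zero hlbc e he⟩
  tfae_finish

/-- Let `(x i, f i)` be a Schauder frame of a Banach space `X` and let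
`Y` be the closed linear span of `(f i)` in `X*`. TFAE:
(a) locally shrinking and `‖x**|span(f i : i ≥ n)‖ → 0` for every `x** ∈ X**`;
(b) locally shrinking, locally boundedly complete and pre-boundedly complete;
(c) locally shrinking, locally boundedly complete, and for every `x** ∈ X**` there is
`x ∈ X` with `g x = lim_n g (∑_{i<n} x**(f i) • x i)` for all `g ∈ Y`;
(d) locally shrinking, locally boundedly complete, and the canonical map `J : X → Y*`,
`J x g = g x`, is an isomorphism of `X` onto `Y*`. -/
theorem schauderFrame_boundedlyComplete_tfae
    {X : Type*} [NormedAddCommGroup X] [NormedSpace ℝ X] [CompleteSpace X]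
    (x : ℕ → X) (f : ℕ → X →L[ℝ] ℝ)
    (hx : ∀ i, x i ≠ 0) (hf : ∀ i, f i ≠ 0)
    (hframe : ∀ v : X,
      Tendsto (fun n => ∑ i ∈ Finset.range n, f i v • x i) atTop (𝓝 v)) :
    List.TFAE
      [ ((∀ m : ℕ, Tendsto (tailSupX x (f m)) atTop (𝓝 0)) ∧
          ∀ F : (X →L[ℝ] ℝ) →L[ℝ] ℝ, Tendsto (tailSupBidual f F) atTop (𝓝 0)),
        ((∀ m : ℕ, Tendsto (tailSupX x (f m)) atTop (𝓝 0)) ∧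
          (∀ m : ℕ, Tendsto (tailSupF f (x m)) atTop (𝓝 0)) ∧
          ∀ F : (X →L[ℝ] ℝ) →L[ℝ] ℝ, ∃ v : X,
            Tendsto (fun n => ∑ i ∈ Finset.range n, F (f i) • x i) atTop (𝓝 v)),
        ((∀ m : ℕ, Tendsto (tailSupX x (f m)) atTop (𝓝 0)) ∧
          (∀ m : ℕ, Tendsto (tailSupF f (x m)) atTop (𝓝 0)) ∧
          ∀ F : (X →L[ℝ] ℝ) →L[ℝ] ℝ, ∃ v : X,
            ∀ g ∈ (Submodule.span ℝ (Set.range f)).topologicalClosure,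
              Tendsto (fun n => g (∑ i ∈ Finset.range n, F (f i) • x i)) atTop
                (𝓝 (g v))),
        ((∀ m : ℕ, Tendsto (tailSupX x (f m)) atTop (𝓝 0)) ∧
          (∀ m : ℕ, Tendsto (tailSupF f (x m)) atTop (𝓝 0)) ∧
          ∃ e : X ≃L[ℝ]
              (↥((Submodule.span ℝ (Set.range f)).topologicalClosure) →L[ℝ] ℝ),
            ∀ (v : X) (g : ↥((Submodule.span ℝ (Set.range f)).topologicalClosure)),
              e v g = (g : X →L[ℝ] ℝ) v) ] :=
  schauderFrame_boundedlyComplete_tfae_general x f hframe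
end

section
/- Let (x_i, f_i) be a Schauder frame of a Banach space X such that every normalized block sequence of (x_i) is weakly null. Then the frame is pre-shrinking. -/
open Filter Topology

/-! Let `Sₙ = ∑_{i<n} fᵢ ⊗ xᵢ` be the partial sum operators of the frame; they converge strongly to
the identity, so by Banach–Steinhaus `‖Sₙ‖ ≤ C`. If `g ∘ Sₙ` does not converge to `g` in norm,
there are `δ > 0` and arbitrarily late `n` with `‖g - g ∘ Sₙ‖ > δ`; testing on a unit vector `v`
and using `g (S_N v) → g v` yields blocks `(S_N - Sₙ) v` of norm `≤ 2C` on which `|g| > δ`.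
Choosing these blocks successively gives a block sequence whose normalization stays at least
`δ / 2C` under `g`, so it is not weakly null. -/

section PartialSums

variable {𝕜 X : Type*} [NontriviallyNormedField 𝕜] [NormedAddCommGroup X] [NormedSpace 𝕜 X]

noncomputable def partialSumOp (f : ℕ → X →L[𝕜] 𝕜) (x : ℕ → X) (n : ℕ) : X →L[𝕜] X :=
  ∑ i ∈ Finset.range n, (f i).smulRight (x i)

variable (f : ℕ → X →L[𝕜] 𝕜) (x : ℕ → X)

theorem partialSumOp_apply (n : ℕ) (v : X) :
    partialSumOp f x n v = ∑ i ∈ Finset.range n, f i v • x i := by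
  simp [partialSumOp]

theorem comp_partialSumOp (g : X →L[𝕜] 𝕜) (n : ℕ) :
    g.comp (partialSumOp f x n) = ∑ i ∈ Finset.range n, g (x i) • f i := by
  ext v
  simp [partialSumOp_apply, mul_comm]

theorem partialSumOp_sub_apply {m n : ℕ} (hmn : m ≤ n) (v : X) :
    partialSumOp f x n v - partialSumOp f x m v = ∑ i ∈ Finset.Ico m n, f i v • x i := by
  rw [Finset.sum_Ico_eq_sub _ hmn, partialSumOp_apply, partialSumOp_apply]

theorem exists_norm_partialSumOp_sub_apply_le [CompleteSpace X]
    (hframe : ∀ v, Tendsto (fun n => ∑ i ∈ Finset.range n, f i v • x i) atTop (𝓝 v)) :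
    ∃ C, ∀ m n (v : X), ‖v‖ ≤ 1 → ‖partialSumOp f x n v - partialSumOp f x m v‖ ≤ C := by
  have hbdd : ∀ v, ∃ C, ∀ n, ‖partialSumOp f x n v‖ ≤ C := fun v => by
    obtain ⟨C, hC⟩ := (hframe v).norm.bddAbove_range
    exact ⟨C, fun n => by simpa [partialSumOp_apply] using hC ⟨n, rfl⟩⟩
  obtain ⟨C, hC⟩ := banach_steinhaus hbdd
  refine ⟨(C + C) * 1, fun m n v hv => ?_⟩
  rw [← sub_apply]
  exact (partialSumOp f x n - partialSumOp f x m).le_of_opNorm_le_of_le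
    ((norm_sub_le _ _).trans (add_le_add (hC n) (hC m))) hv

end PartialSums

theorem ContinuousLinearMap.exists_lt_norm_sub_apply_of_lt_opNorm_sub {𝕜 E F : Type*}
    [DenselyNormedField 𝕜] [NormedAddCommGroup E] [NormedSpace 𝕜 E]
    [NormedAddCommGroup F] [NormedSpace 𝕜 F] {φ : ℕ → E →L[𝕜] F} {g : E →L[𝕜] F}
    (hφ : ∀ v, Tendsto (fun n => φ n v) atTop (𝓝 (g v))) {δ : ℝ} {n : ℕ}
    (h : δ < ‖g - φ n‖) : ∃ v, ‖v‖ ≤ 1 ∧ ∃ N, n < N ∧ δ < ‖φ N v - φ n v‖ := by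
  obtain ⟨v, hv, hδv⟩ := (g - φ n).exists_lt_apply_of_lt_opNorm h
  have hlim : Tendsto (fun N => ‖φ N v - φ n v‖) atTop (𝓝 ‖g v - φ n v‖) :=
    ((hφ v).sub_const _).norm
  obtain ⟨N, hnN, hδN⟩ := ((eventually_gt_atTop n).and (hlim.eventually (lt_mem_nhds hδv))).exists
  exact ⟨v, hv.le, N, hnN, hδN⟩

theorem exists_seq_successive_intervals {P : ℕ → ℕ → Prop}
    (h : ∀ M, ∃ a b, M ≤ a ∧ a < b ∧ P a b) :
    ∃ m n : ℕ → ℕ, (∀ k, m k < n k) ∧ (∀ k, n k ≤ m (k + 1)) ∧ ∀ k, P (m k) (n k) := by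
  choose a b hMa hab hP using h
  -- the `k`-th interval is chosen beyond `start k`, the right end of the previous one
  let start : ℕ → ℕ := fun k => Nat.rec 0 (fun _ M => b M) k
  exact ⟨fun k => a (start k), fun k => b (start k), fun k => hab _, fun k => hMa _,
    fun k => hP _⟩

section Blocks

variable {X : Type*} [NormedAddCommGroup X] [NormedSpace ℝ X]

theorem IsNormalizedBlock.of_Ico {x u : ℕ → X} (m n : ℕ → ℕ) (c : ℕ → ℕ → ℝ)
    (hmn : ∀ k, m k < n k) (hnm : ∀ k, n k ≤ m (k + 1))
    (hu : ∀ k, u k = ∑ i ∈ Finset.Ico (m k) (n k), c k i • x i) (hnorm : ∀ k, ‖u k‖ = 1) :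
    IsNormalizedBlock x u := by
  classical
  have hm : Monotone m := monotone_nat_of_le_succ fun k => (hmn k).le.trans (hnm k)
  have hdisj : ∀ {k l i}, i ∈ Finset.Ico (m k) (n k) → i ∈ Finset.Ico (m l) (n l) → k = l := by
    intro k l i hk hl
    simp only [Finset.mem_Ico] at hk hl
    by_contra hkl
    rcases Nat.lt_or_gt_of_ne hkl with h | h
    · have := (hnm k).trans (hm h); omega
    · have := (hnm l).trans (hm h); omega
  let a : ℕ → ℝ := fun i => if h : ∃ k, i ∈ Finset.Ico (m k) (n k) then c h.choose i else 0
  refine ⟨m, fun k => n k - 1, a, fun k => by dsimp only; have := hmn k; omega,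
    fun k => by dsimp only; have := hmn k; have := hnm k; omega, fun k => ?_, hnorm⟩
  rw [hu k, Finset.Icc_sub_one_right_eq_Ico_of_not_isMin
    (not_isMin_iff_ne_bot.2 (hmn k).ne_bot)]
  refine Finset.sum_congr rfl fun i hi => ?_
  have hex : ∃ k, i ∈ Finset.Ico (m k) (n k) := ⟨k, hi⟩
  simp only [a, dif_pos hex, hdisj hex.choose_spec hi]

theorem not_weaklyNull_normalize {w : ℕ → X} {g : X →L[ℝ] ℝ} {B δ : ℝ} (hδ : 0 < δ)
    (hB : ∀ k, ‖w k‖ ≤ B) (hg : ∀ k, δ < ‖g (w k)‖) :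
    ¬ WeaklyNull fun k => ‖w k‖⁻¹ • w k := by
  intro hnull
  have hw : ∀ k, 0 < ‖w k‖ := fun k =>
    norm_pos_iff.2 fun h0 => by simpa [h0, hδ.not_gt] using hg k
  have hB0 : 0 < B := (hw 0).trans_le (hB 0)
  obtain ⟨k, hk⟩ := ((hnull g).norm.eventually (gt_mem_nhds (by simpa using div_pos hδ hB0))).exists
  have hlow : δ / B ≤ ‖g (‖w k‖⁻¹ • w k)‖ := by
    rw [map_smul, norm_smul, norm_inv, norm_norm, inv_mul_eq_div]
    exact div_le_div₀ (hδ.le.trans (hg k).le) (hg k).le (hw k) (hB k)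
  exact (hlow.trans_lt hk).false

end Blocks

theorem schauderFrame_blocksWeaklyNull_preShrinking_general
    {X : Type*} [NormedAddCommGroup X] [NormedSpace ℝ X] [CompleteSpace X]
    (x : ℕ → X) (f : ℕ → X →L[ℝ] ℝ)
    (hframe : ∀ v : X,
      Tendsto (fun n => ∑ i ∈ Finset.range n, f i v • x i) atTop (𝓝 v))
    (hblock : ∀ u : ℕ → X, IsNormalizedBlock x u → WeaklyNull u) :
    ∀ g : X →L[ℝ] ℝ,
      Tendsto (fun n => ∑ i ∈ Finset.range n, g (x i) • f i) atTop (𝓝 g) := by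
  intro g
  set S := partialSumOp f x
  simp_rw [← comp_partialSumOp]
  by_contra hnot
  obtain ⟨δ, hδ, hfar⟩ : ∃ δ > 0, ∀ M : ℕ, ∃ n ≥ M, δ < ‖g - g.comp (S n)‖ := by
    by_contra! hnear
    refine hnot <| Metric.tendsto_atTop.2 fun ε hε => ?_
    obtain ⟨M, hM⟩ := hnear (ε / 2) (half_pos hε)
    exact ⟨M, fun n hn => by rw [dist_eq_norm']; linarith [hM n hn]⟩
  have hS : ∀ v, Tendsto (fun n => g.comp (S n) v) atTop (𝓝 (g v)) := fun v =>
    (g.continuous.tendsto v).comp (by simpa [S, partialSumOp_apply] using hframe v)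
  have hblocks : ∀ M, ∃ a b, M ≤ a ∧ a < b ∧ ∃ v : X, ‖v‖ ≤ 1 ∧ δ < ‖g (S b v - S a v)‖ := by
    intro M
    obtain ⟨a, haM, ha⟩ := hfar M
    obtain ⟨v, hv, b, hab, hb⟩ := g.exists_lt_norm_sub_apply_of_lt_opNorm_sub hS ha
    exact ⟨a, b, haM, hab, v, hv, by simpa using hb⟩
  obtain ⟨m, n, hmn, hnm, hP⟩ := exists_seq_successive_intervals hblocks
  choose v hv hgv using hP
  obtain ⟨C, hC⟩ := exists_norm_partialSumOp_sub_apply_le f x hframe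
  set w := fun k => S (n k) (v k) - S (m k) (v k)
  have hw : ∀ k, w k ≠ 0 := fun k h0 => by simpa [w, h0, hδ.not_gt] using hgv k
  refine not_weaklyNull_normalize hδ (fun k => hC _ _ _ (hv k)) hgv (hblock _ ?_)
  refine IsNormalizedBlock.of_Ico m n (fun k i => ‖w k‖⁻¹ * f i (v k)) hmn hnm (fun k => ?_)
    (fun k => norm_smul_inv_norm (hw k))
  simp only [w, S, partialSumOp_sub_apply f x (hmn k).le, Finset.smul_sum, smul_smul]

/-- If `(x i, f i)` is a Schauder frame of a Banach space `X` such that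
every normalized block sequence of `(x i)` is weakly null, then the frame is pre-shrinking:
for every `g ∈ X*`, the series `∑ g (x i) • f i` converges in norm (to `g`). -/
theorem schauderFrame_blocksWeaklyNull_preShrinking
    {X : Type*} [NormedAddCommGroup X] [NormedSpace ℝ X] [CompleteSpace X]
    (x : ℕ → X) (f : ℕ → X →L[ℝ] ℝ)
    (hx : ∀ i, x i ≠ 0) (hf : ∀ i, f i ≠ 0)
    (hframe : ∀ v : X,
      Tendsto (fun n => ∑ i ∈ Finset.range n, f i v • x i) atTop (𝓝 v))
    (hblock : ∀ u : ℕ → X, IsNormalizedBlock x u → WeaklyNull u) :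
    ∀ g : X →L[ℝ] ℝ,
      Tendsto (fun n => ∑ i ∈ Finset.range n, g (x i) • f i) atTop (𝓝 g) :=
  schauderFrame_blocksWeaklyNull_preShrinking_general x f hframe hblock
end

section
/- Let (x_i, f_i) be a Schauder frame of a Banach space X. If the frame is both pre-shrinking and pre-boundedly complete, then X is reflexive. -/
open Filter Topology

section DualPairing

variable {𝕜 X : Type*} [NormedField 𝕜] [NormedAddCommGroup X] [NormedSpace 𝕜 X]
  (F : (X →L[𝕜] 𝕜) →L[𝕜] 𝕜) (g : X →L[𝕜] 𝕜)

theorem apply_sum_smul_dual_eq_apply_sum_smul {ι : Type*} (x : ι → X) (f : ι → X →L[𝕜] 𝕜)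
    (s : Finset ι) :
    F (∑ i ∈ s, g (x i) • f i) = g (∑ i ∈ s, F (f i) • x i) := by
  simp only [map_sum, map_smul, smul_eq_mul, mul_comm]

theorem apply_eq_of_tendsto_partialSums (x : ℕ → X) (f : ℕ → X →L[𝕜] 𝕜) {v : X}
    (hg : Tendsto (fun n => ∑ i ∈ Finset.range n, g (x i) • f i) atTop (𝓝 g))
    (hv : Tendsto (fun n => ∑ i ∈ Finset.range n, F (f i) • x i) atTop (𝓝 v)) :
    F g = g v := by
  have hFg := (F.continuous.tendsto g).comp hg
  have hgv := (g.continuous.tendsto v).comp hv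
  refine tendsto_nhds_unique (hFg.congr fun n => ?_) hgv
  exact apply_sum_smul_dual_eq_apply_sum_smul F g x f _

end DualPairing

theorem schauderFrame_preShrinking_preBoundedlyComplete_reflexive_general
    {X : Type*} [NormedAddCommGroup X] [NormedSpace ℝ X]
    (x : ℕ → X) (f : ℕ → X →L[ℝ] ℝ)
    (hpreShr : ∀ g : X →L[ℝ] ℝ,
      Tendsto (fun n => ∑ i ∈ Finset.range n, g (x i) • f i) atTop (𝓝 g))
    (hpreBdd : ∀ F : (X →L[ℝ] ℝ) →L[ℝ] ℝ, ∃ v : X,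
      Tendsto (fun n => ∑ i ∈ Finset.range n, F (f i) • x i) atTop (𝓝 v)) :
    Function.Surjective (NormedSpace.inclusionInDoubleDual ℝ X) := by
  intro F
  obtain ⟨v, hv⟩ := hpreBdd F
  refine ⟨v, ContinuousLinearMap.ext fun g => ?_⟩
  exact (apply_eq_of_tendsto_partialSums F g x f (hpreShr g) hv).symm

/-- If `(x i, f i)` is a Schauder frame of a Banach space `X` which is
both pre-shrinking and pre-boundedly complete, then `X` is reflexive: the canonical
isometric embedding of `X` into its double dual is surjective. -/
theorem schauderFrame_preShrinking_preBoundedlyComplete_reflexive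
    {X : Type*} [NormedAddCommGroup X] [NormedSpace ℝ X] [CompleteSpace X]
    (x : ℕ → X) (f : ℕ → X →L[ℝ] ℝ)
    (hx : ∀ i, x i ≠ 0) (hf : ∀ i, f i ≠ 0)
    (hframe : ∀ v : X,
      Tendsto (fun n => ∑ i ∈ Finset.range n, f i v • x i) atTop (𝓝 v))
    (hpreShr : ∀ g : X →L[ℝ] ℝ,
      Tendsto (fun n => ∑ i ∈ Finset.range n, g (x i) • f i) atTop (𝓝 g))
    (hpreBdd : ∀ F : (X →L[ℝ] ℝ) →L[ℝ] ℝ, ∃ v : X,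
      Tendsto (fun n => ∑ i ∈ Finset.range n, F (f i) • x i) atTop (𝓝 v)) :
    Function.Surjective (NormedSpace.inclusionInDoubleDual ℝ X) :=
  schauderFrame_preShrinking_preBoundedlyComplete_reflexive_general x f hpreShr hpreBdd
end
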